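/- arXiv:2002.08652 — 8 statements merged into one kernel-verified Lean document; each statement's English description precedes it below -/
import Mathlib

section
/- Approximation lemma for large deviation upper bounds (Lemma 4.1, upper bound): Let (E, ρ) be a separable metric space, I a nonempty index set, (Ω, 𝓕, P) a probability space, and for each ν ∈ I and each t > 0 let L_t^ν and L̄_t^ν be Borel-measurable maps from Ω to E. Let λ : (0,∞) → (0,∞) satisfy λ(t) → ∞ as t → ∞, and let J : E → [0,∞] have compact level sets. Assume: (i) for every closed set A ⊆ E, limsup_{t→∞} (1/λ(t)) · sup_{ν∈I} log P(L̄_t^ν ∈ A) ≤ −inf_{x∈A} J(x); and (ii) for every δ > 0, (1/λ(t)) · sup_{ν∈I} log P(ρ(L_t^ν, L̄_t^ν) > δ) → −∞ as t → ∞. Then for every closed set A ⊆ E, limsup_{t→∞} (1/λ(t)) · sup_{ν∈I} log P(L_t^ν ∈ A) ≤ −inf_{x∈A} J(x). -/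
open MeasureTheory Filter Set
open scoped ENNReal NNReal

/-!
Fix a real `c < inf_A J`. Since the sublevel set `{J ≤ c}` is compact and disjoint from the
closed set `A`, `J ≥ c` already holds on some closed thickening `A^δ`. Whenever `L ∈ A`, either
`Lbar ∈ A^δ` or `dist (L, Lbar) > δ`, so `P(L ∈ A) ≤ 2 max (P(Lbar ∈ A^δ), P(dist > δ))`. On the
scale `1 / λ(t)` the factor `2` disappears and the maximum turns into a maximum of limsups, which
are at most `-c` by (i) and `⊥` by (ii).
-/

open Metric

theorem ENNReal.log_add_le_log_two_add_max (a b : ℝ≥0∞) :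
    log (a + b) ≤ Real.log 2 + max (log a) (log b) := by
  have h2 : log 2 = Real.log 2 := by
    simpa using ENNReal.log_ofReal_of_pos (x := 2) two_pos
  calc log (a + b) ≤ log (2 * max a b) := log_monotone <| by
        rw [two_mul]; exact add_le_add (le_max_left a b) (le_max_right a b)
    _ = Real.log 2 + max (log a) (log b) := by rw [log_mul_add, h2, log_monotone.map_max]

theorem EReal.le_neg_of_forall_le_neg {x m : EReal} (h : ∀ c : ℝ, (c : EReal) < m → x ≤ -c) :
    x ≤ -m :=
  EReal.le_neg_of_le_neg <| EReal.ge_of_forall_gt_iff_ge.1 fun c hc =>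
    EReal.le_neg_of_le_neg (h c hc)

theorem exists_pos_le_iInf_cthickening {E : Type*} [PseudoMetricSpace E] {J : E → ℝ≥0∞}
    (hJ : ∀ r : ℝ≥0, IsCompact {x | J x ≤ r}) {A : Set E} (hA : IsClosed A) {c : ℝ}
    (hc : (c : EReal) < ⨅ x ∈ A, (J x : EReal)) :
    ∃ δ > 0, (c : EReal) ≤ ⨅ x ∈ cthickening δ A, (J x : EReal) := by
  rcases lt_or_ge c 0 with hc0 | hc0
  · refine ⟨1, one_pos, le_iInf₂ fun x _ => ?_⟩
    exact (EReal.coe_lt_coe_iff.2 hc0).le.trans (EReal.coe_ennreal_nonneg _)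
  lift c to ℝ≥0 using hc0
  rw [← EReal.coe_nnreal_eq_coe_real] at hc ⊢
  have hdisj : Disjoint {x | J x ≤ c} A := Set.disjoint_left.2 fun x hxK hxA =>
    (hc.trans_le (iInf₂_le x hxA)).not_ge (EReal.coe_ennreal_le_coe_ennreal_iff.2 hxK)
  obtain ⟨δ, hδ, hδdisj⟩ := hdisj.exists_cthickenings (hJ c) hA
  refine ⟨δ, hδ, le_iInf₂ fun x hx => EReal.coe_ennreal_le_coe_ennreal_iff.2 ?_⟩
  exact le_of_not_ge fun hxK => Set.disjoint_left.1 hδdisj (self_subset_cthickening _ hxK) hx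

theorem setOf_mem_subset_cthickening_union {α E : Type*} [PseudoMetricSpace E] (f g : α → E)
    (A : Set E) (δ : ℝ) :
    {a | f a ∈ A} ⊆ {a | g a ∈ cthickening δ A} ∪ {a | δ < dist (f a) (g a)} := by
  intro a ha
  by_cases hd : δ < dist (f a) (g a)
  · exact Or.inr hd
  · exact Or.inl (mem_cthickening_of_dist_le _ _ δ A ha (by rw [dist_comm]; exact not_lt.1 hd))

section ScaledLogProb

variable {Ω I : Type*} [MeasurableSpace Ω] (P : Measure Ω) (lam : ℝ → ℝ)

noncomputable def scaledLogProb (S : I → ℝ → Set Ω) (t : ℝ) : EReal :=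
  ((1 / lam t : ℝ) : EReal) * ⨆ ν, ENNReal.log (P (S ν t))

variable {P lam}

theorem iSup_log_measure_le_of_subset_union {S T U : I → Set Ω}
    (hS : ∀ ν, S ν ⊆ T ν ∪ U ν) :
    ⨆ ν, ENNReal.log (P (S ν)) ≤
      Real.log 2 + max (⨆ ν, ENNReal.log (P (T ν))) (⨆ ν, ENNReal.log (P (U ν))) :=
  iSup_le fun ν => calc
    ENNReal.log (P (S ν)) ≤ ENNReal.log (P (T ν) + P (U ν)) :=
      ENNReal.log_monotone ((measure_mono (hS ν)).trans (measure_union_le _ _))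
    _ ≤ Real.log 2 + max (ENNReal.log (P (T ν))) (ENNReal.log (P (U ν))) :=
      ENNReal.log_add_le_log_two_add_max _ _
    _ ≤ _ := by gcongr <;> exact le_iSup (fun μ => ENNReal.log (P _)) ν

theorem scaledLogProb_le_of_subset_union {S T U : I → ℝ → Set Ω} {t : ℝ} (ht : 0 < lam t)
    (hS : ∀ ν, S ν t ⊆ T ν t ∪ U ν t) :
    scaledLogProb P lam S t ≤
      ((Real.log 2 / lam t : ℝ) : EReal) +
        max (scaledLogProb P lam T t) (scaledLogProb P lam U t) := by
  have hr : (0 : EReal) ≤ ((1 / lam t : ℝ) : EReal) := by exact_mod_cast (one_div_pos.2 ht).le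
  have hmono : Monotone fun x : EReal => ((1 / lam t : ℝ) : EReal) * x :=
    fun _ _ h => mul_le_mul_of_nonneg_left h hr
  calc scaledLogProb P lam S t
      ≤ ((1 / lam t : ℝ) : EReal) * (Real.log 2 + max (⨆ ν, ENNReal.log (P (T ν t)))
          (⨆ ν, ENNReal.log (P (U ν t)))) :=
        hmono (iSup_log_measure_le_of_subset_union hS)
    _ = _ := by
      rw [EReal.left_distrib_of_nonneg_of_ne_top hr (EReal.coe_ne_top _), hmono.map_max,
        ← EReal.coe_mul, one_div_mul_eq_div]
      rfl

theorem limsup_scaledLogProb_le_of_subset_union (hlam : Tendsto lam atTop atTop)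
    {S T U : I → ℝ → Set Ω} (hS : ∀ ν t, S ν t ⊆ T ν t ∪ U ν t) :
    limsup (scaledLogProb P lam S) atTop ≤
      max (limsup (scaledLogProb P lam T) atTop) (limsup (scaledLogProb P lam U) atTop) := by
  set g : ℝ → EReal := fun t => ((Real.log 2 / lam t : ℝ) : EReal)
  have hg : limsup g atTop = 0 := by
    exact (EReal.tendsto_coe.2 (hlam.const_div_atTop (Real.log 2))).limsup_eq
  calc limsup (scaledLogProb P lam S) atTop
      ≤ limsup (g + fun t => max (scaledLogProb P lam T t) (scaledLogProb P lam U t)) atTop :=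
        limsup_le_limsup <| (hlam.eventually_gt_atTop 0).mono fun t ht =>
          scaledLogProb_le_of_subset_union ht (hS · t)
    _ ≤ limsup g atTop +
          limsup (fun t => max (scaledLogProb P lam T t) (scaledLogProb P lam U t)) atTop :=
        EReal.limsup_add_le (.inl (by simp [hg])) (.inl (by simp [hg]))
    _ = _ := by rw [hg, zero_add, limsup_max]

end ScaledLogProb

theorem approximation_lemma_upper_general
    {E : Type*} [MetricSpace E]
    {I : Type*}
    {Ω : Type*} [MeasurableSpace Ω] (P : Measure Ω)
    (L Lbar : I → ℝ → Ω → E)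
    (lam : ℝ → ℝ)
    (hlam : Tendsto lam atTop atTop)
    (J : E → ℝ≥0∞) (hJ : ∀ r : NNReal, IsCompact {x : E | J x ≤ r})
    -- (i) uniform upper bound for `Lbar`
    (hupper : ∀ A : Set E, IsClosed A →
      limsup (fun t : ℝ =>
          ((1 / lam t : ℝ) : EReal) *
            ⨆ ν : I, ENNReal.log (P {ω | Lbar ν t ω ∈ A})) atTop
        ≤ -(⨅ x ∈ A, (J x : EReal)))
    -- (ii) superexponential approximation
    (happrox : ∀ δ > (0 : ℝ),
      Tendsto (fun t : ℝ =>
          ((1 / lam t : ℝ) : EReal) *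
            ⨆ ν : I, ENNReal.log (P {ω | δ < dist (L ν t ω) (Lbar ν t ω)}))
        atTop (nhds (⊥ : EReal))) :
    ∀ A : Set E, IsClosed A →
      limsup (fun t : ℝ =>
          ((1 / lam t : ℝ) : EReal) *
            ⨆ ν : I, ENNReal.log (P {ω | L ν t ω ∈ A})) atTop
        ≤ -(⨅ x ∈ A, (J x : EReal)) := by
  intro A hA
  refine EReal.le_neg_of_forall_le_neg fun c hc => ?_
  obtain ⟨δ, hδ, hcδ⟩ := exists_pos_le_iInf_cthickening hJ hA hc
  calc limsup (scaledLogProb P lam fun ν t => {ω | L ν t ω ∈ A}) atTop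
      ≤ max (limsup (scaledLogProb P lam fun ν t => {ω | Lbar ν t ω ∈ cthickening δ A}) atTop)
          (limsup (scaledLogProb P lam fun ν t => {ω | δ < dist (L ν t ω) (Lbar ν t ω)})
            atTop) :=
        limsup_scaledLogProb_le_of_subset_union hlam fun ν t =>
          setOf_mem_subset_cthickening_union (L ν t) (Lbar ν t) A δ
    _ ≤ max (-(⨅ x ∈ cthickening δ A, (J x : EReal))) ⊥ :=
        max_le_max (hupper _ isClosed_cthickening) (happrox δ hδ).limsup_eq.le
    _ ≤ -c := by rw [max_bot_right]; exact EReal.neg_le_neg_iff.2 hcδ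

/-- **Approximation lemma for LDP, upper bound** (Lemma 4.1 of the paper).
If the family `Lbar` satisfies the uniform large deviation upper bound with rate
function `J` (with compact level sets) and speed `lam t → ∞`, and `L` is
superexponentially close to `Lbar` uniformly in the index `ν`, then `L` satisfies
the same uniform large deviation upper bound. -/
theorem approximation_lemma_upper
    {E : Type*} [MetricSpace E] [TopologicalSpace.SeparableSpace E]
    [MeasurableSpace E] [BorelSpace E]
    {I : Type*} [Nonempty I]
    {Ω : Type*} [MeasurableSpace Ω] (P : Measure Ω) [IsProbabilityMeasure P]
    (L Lbar : I → ℝ → Ω → E)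
    (hL : ∀ ν : I, ∀ t > (0 : ℝ), Measurable (L ν t))
    (hLbar : ∀ ν : I, ∀ t > (0 : ℝ), Measurable (Lbar ν t))
    (lam : ℝ → ℝ) (hlam_pos : ∀ t > (0 : ℝ), 0 < lam t)
    (hlam : Tendsto lam atTop atTop)
    (J : E → ℝ≥0∞) (hJ : ∀ r : NNReal, IsCompact {x : E | J x ≤ r})
    -- (i) uniform upper bound for `Lbar`
    (hupper : ∀ A : Set E, IsClosed A →
      limsup (fun t : ℝ =>
          ((1 / lam t : ℝ) : EReal) *
            ⨆ ν : I, ENNReal.log (P {ω | Lbar ν t ω ∈ A})) atTop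
        ≤ -(⨅ x ∈ A, (J x : EReal)))
    -- (ii) superexponential approximation
    (happrox : ∀ δ > (0 : ℝ),
      Tendsto (fun t : ℝ =>
          ((1 / lam t : ℝ) : EReal) *
            ⨆ ν : I, ENNReal.log (P {ω | δ < dist (L ν t ω) (Lbar ν t ω)}))
        atTop (nhds (⊥ : EReal))) :
    ∀ A : Set E, IsClosed A →
      limsup (fun t : ℝ =>
          ((1 / lam t : ℝ) : EReal) *
            ⨆ ν : I, ENNReal.log (P {ω | L ν t ω ∈ A})) atTop
        ≤ -(⨅ x ∈ A, (J x : EReal)) :=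
  approximation_lemma_upper_general P L Lbar lam hlam J hJ hupper happrox
end

section
/- Approximation lemma for large deviation lower bounds (Lemma 4.1, lower bound): Let (E, ρ) be a separable metric space, I a nonempty index set, (Ω, 𝓕, P) a probability space, and for each ν ∈ I and each t > 0 let L_t^ν and L̄_t^ν be Borel-measurable maps from Ω to E. Let λ : (0,∞) → (0,∞) satisfy λ(t) → ∞ as t → ∞, and let J : E → [0,∞] have compact level sets. Assume: (i) for every open set A ⊆ E, liminf_{t→∞} (1/λ(t)) · inf_{ν∈I} log P(L̄_t^ν ∈ A) ≥ −inf_{x∈A} J(x); and (ii) for every δ > 0, (1/λ(t)) · sup_{ν∈I} log P(ρ(L_t^ν, L̄_t^ν) > δ) → −∞ as t → ∞. Then for every open set A ⊆ E, liminf_{t→∞} (1/λ(t)) · inf_{ν∈I} log P(L_t^ν ∈ A) ≥ −inf_{x∈A} J(x). -/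
/-! If `Lbar` lands in the ball `B(x, ε/2)`, where `B(x, ε) ⊆ A`, and `L` stays within `ε/2` of
`Lbar`, then `L` lands in `A`; hence `P(Lbar ∈ B) ≤ P(L ∈ A) + P(dist(L, Lbar) > ε/2)`, uniformly
in `ν`. On the scale `λ(t)` the superexponentially small last term cannot lower the rate:
if `P(Lbar ∈ B) ≥ e^{m₁ λ}` and the error is `≤ e^{m λ}` with `m < m₁`, then `P(L ∈ A) ≥ e^{m λ}`
as soon as `e^{(m₁ - m) λ} ≥ 2`. -/

open MeasureTheory Filter Set Metric Topology
open scoped ENNReal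

noncomputable def logRate {α : Type*} (lam : α → ℝ) (f : α → ℝ≥0∞) (t : α) : EReal :=
  ((1 / lam t : ℝ) : EReal) * ENNReal.log (f t)

lemma EReal.coe_one_div_mul_eq_div (s : ℝ) (z : EReal) :
    ((1 / s : ℝ) : EReal) * z = z / s := by
  rw [EReal.div_eq_inv_mul, one_div, EReal.coe_inv]

lemma EReal.coe_le_one_div_mul_iff {s r : ℝ} (hs : 0 < s) {z : EReal} :
    (r : EReal) ≤ ((1 / s : ℝ) : EReal) * z ↔ ((r * s : ℝ) : EReal) ≤ z := by
  rw [EReal.coe_one_div_mul_eq_div,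
    EReal.le_div_iff_mul_le (by exact_mod_cast hs) (EReal.coe_ne_top s), EReal.coe_mul]

lemma EReal.one_div_mul_le_coe_iff {s r : ℝ} (hs : 0 < s) {z : EReal} :
    ((1 / s : ℝ) : EReal) * z ≤ r ↔ z ≤ ((s * r : ℝ) : EReal) := by
  rw [EReal.coe_one_div_mul_eq_div,
    EReal.div_le_iff_le_mul (by exact_mod_cast hs) (EReal.coe_ne_top s), EReal.coe_mul]

lemma ENNReal.iInf_log {ι : Type*} (f : ι → ℝ≥0∞) :
    ⨅ i, ENNReal.log (f i) = ENNReal.log (⨅ i, f i) :=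
  (ENNReal.logOrderIso.map_iInf f).symm

lemma ENNReal.iSup_log {ι : Type*} (f : ι → ℝ≥0∞) :
    ⨆ i, ENNReal.log (f i) = ENNReal.log (⨆ i, f i) :=
  (ENNReal.logOrderIso.map_iSup f).symm

lemma ENNReal.le_log_iff_exp_le {x : EReal} {a : ℝ≥0∞} :
    x ≤ ENNReal.log a ↔ EReal.exp x ≤ a := by
  rw [← ENNReal.log_le_log_iff, EReal.log_exp]

lemma ENNReal.le_log_of_le_add {a b c : ℝ≥0∞} {u : ℝ} (habc : a ≤ c + b)
    (ha : ((u + Real.log 2 : ℝ) : EReal) ≤ ENNReal.log a) (hb : ENNReal.log b ≤ u) :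
    (u : EReal) ≤ ENNReal.log c := by
  rw [ENNReal.le_log_iff_exp_le] at ha ⊢
  rw [← EReal.log_exp u, ENNReal.log_le_log_iff] at hb
  have hdouble : EReal.exp ((u + Real.log 2 : ℝ)) = EReal.exp u + EReal.exp u := by
    rw [EReal.exp_coe, EReal.exp_coe, Real.exp_add, Real.exp_log two_pos, mul_two,
      ENNReal.ofReal_add (Real.exp_nonneg u) (Real.exp_nonneg u)]
  refine (ENNReal.add_le_add_iff_right (EReal.exp_lt_top_iff.2 (EReal.coe_lt_top u)).ne).1 ?_
  calc EReal.exp u + EReal.exp u = EReal.exp ((u + Real.log 2 : ℝ)) := hdouble.symm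
    _ ≤ c + b := ha.trans habc
    _ ≤ c + EReal.exp u := by gcongr

theorem liminf_logRate_le_of_le_add {α : Type*} {l : Filter α} {lam : α → ℝ}
    (hlam : Tendsto lam l atTop) {a b c : α → ℝ≥0∞} (habc : ∀ᶠ t in l, a t ≤ c t + b t)
    (hb : Tendsto (logRate lam b) l (𝓝 ⊥)) :
    liminf (logRate lam a) l ≤ liminf (logRate lam c) l := by
  rw [le_liminf_iff]
  intro y hy
  obtain ⟨m₁, hym₁, hm₁⟩ := EReal.exists_between_coe_real hy
  obtain ⟨m, hym, hmm₁⟩ := EReal.exists_between_coe_real hym₁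
  have hgap : ∀ᶠ t in l, Real.log 2 ≤ (m₁ - m) * lam t :=
    (hlam.const_mul_atTop (sub_pos.2 (EReal.coe_lt_coe_iff.1 hmm₁))).eventually_ge_atTop _
  filter_upwards [habc, eventually_lt_of_lt_liminf hm₁, EReal.tendsto_nhds_bot_iff_real.1 hb m,
    hlam.eventually_gt_atTop 0, hgap] with t habc ha hb hpos hgap
  refine hym.trans_le ((EReal.coe_le_one_div_mul_iff hpos).2 ?_)
  refine ENNReal.le_log_of_le_add habc ?_ ?_
  · refine le_trans ?_ ((EReal.coe_le_one_div_mul_iff hpos).1 ha.le)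
    exact EReal.coe_le_coe_iff.2 (by linarith)
  · rw [mul_comm]
    exact (EReal.one_div_mul_le_coe_iff hpos).1 hb.le

lemma mem_or_lt_dist_of_ball_subset {E : Type*} [PseudoMetricSpace E] {A : Set E} {x y z : E}
    {r δ : ℝ} (hA : ball x (r + δ) ⊆ A) (hz : z ∈ ball x r) : y ∈ A ∨ δ < dist y z := by
  refine or_iff_not_imp_right.2 fun hyz => hA ?_
  calc dist y x ≤ dist y z + dist z x := dist_triangle y z x
    _ < r + δ := by linarith [mem_ball.1 hz, not_lt.1 hyz]

lemma iInf_measure_mem_ball_le {Ω E I : Type*} [MeasurableSpace Ω] [PseudoMetricSpace E]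
    (μ : Measure Ω) (X Y : I → Ω → E) {A : Set E} {x : E} {r δ : ℝ}
    (hA : ball x (r + δ) ⊆ A) :
    ⨅ ν, μ {ω | Y ν ω ∈ ball x r} ≤
      (⨅ ν, μ {ω | X ν ω ∈ A}) + ⨆ ν, μ {ω | δ < dist (X ν ω) (Y ν ω)} := by
  rw [ENNReal.iInf_add]
  refine iInf_mono fun ν => ?_
  calc μ {ω | Y ν ω ∈ ball x r}
      ≤ μ ({ω | X ν ω ∈ A} ∪ {ω | δ < dist (X ν ω) (Y ν ω)}) :=
        measure_mono fun ω hω => mem_or_lt_dist_of_ball_subset hA hω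
    _ ≤ μ {ω | X ν ω ∈ A} + μ {ω | δ < dist (X ν ω) (Y ν ω)} := measure_union_le _ _
    _ ≤ μ {ω | X ν ω ∈ A} + ⨆ ν, μ {ω | δ < dist (X ν ω) (Y ν ω)} := by
        gcongr; exact le_iSup (fun ν => μ {ω | δ < dist (X ν ω) (Y ν ω)}) ν

theorem approximation_lemma_lower_general
    {E : Type*} [MetricSpace E]
    {I : Type*}
    {Ω : Type*} [MeasurableSpace Ω] (P : Measure Ω)
    (L Lbar : I → ℝ → Ω → E)
    (lam : ℝ → ℝ)
    (hlam : Tendsto lam atTop atTop)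
    (J : E → ℝ≥0∞)
    -- (i) uniform lower bound for `Lbar`
    (hlower : ∀ A : Set E, IsOpen A →
      -(⨅ x ∈ A, (J x : EReal)) ≤
        liminf (fun t : ℝ =>
          ((1 / lam t : ℝ) : EReal) *
            ⨅ ν : I, ENNReal.log (P {ω | Lbar ν t ω ∈ A})) atTop)
    -- (ii) superexponential approximation
    (happrox : ∀ δ > (0 : ℝ),
      Tendsto (fun t : ℝ =>
          ((1 / lam t : ℝ) : EReal) *
            ⨆ ν : I, ENNReal.log (P {ω | δ < dist (L ν t ω) (Lbar ν t ω)}))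
        atTop (nhds (⊥ : EReal))) :
    ∀ A : Set E, IsOpen A →
      -(⨅ x ∈ A, (J x : EReal)) ≤
        liminf (fun t : ℝ =>
          ((1 / lam t : ℝ) : EReal) *
            ⨅ ν : I, ENNReal.log (P {ω | L ν t ω ∈ A})) atTop := by
  intro A hA
  simp only [ENNReal.iInf_log, ENNReal.iSup_log] at hlower happrox ⊢
  rw [EReal.neg_le]
  refine le_iInf₂ fun x hx => EReal.neg_le.1 ?_
  obtain ⟨ε, hε, hball⟩ := Metric.isOpen_iff.1 hA x hx
  rw [← add_halves ε] at hball
  calc -(J x : EReal) ≤ -(⨅ y ∈ ball x (ε / 2), (J y : EReal)) :=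
        EReal.neg_le_neg_iff.2 (iInf₂_le x (mem_ball_self (half_pos hε)))
    _ ≤ liminf (logRate lam fun t => ⨅ ν, P {ω | Lbar ν t ω ∈ ball x (ε / 2)}) atTop :=
        hlower _ isOpen_ball
    _ ≤ liminf (logRate lam fun t => ⨅ ν, P {ω | L ν t ω ∈ A}) atTop :=
        liminf_logRate_le_of_le_add hlam
          (Eventually.of_forall fun t => iInf_measure_mem_ball_le P (L · t) (Lbar · t) hball)
          (happrox _ (half_pos hε))

/-- **Approximation lemma for LDP, lower bound** (Lemma 4.1 of the paper).
If the family `Lbar` satisfies the uniform large deviation lower bound with rate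
function `J` (with compact level sets) and speed `lam t → ∞`, and `L` is
superexponentially close to `Lbar` uniformly in the index `ν`, then `L` satisfies
the same uniform large deviation lower bound. -/
theorem approximation_lemma_lower
    {E : Type*} [MetricSpace E] [TopologicalSpace.SeparableSpace E]
    [MeasurableSpace E] [BorelSpace E]
    {I : Type*} [Nonempty I]
    {Ω : Type*} [MeasurableSpace Ω] (P : Measure Ω) [IsProbabilityMeasure P]
    (L Lbar : I → ℝ → Ω → E)
    (hL : ∀ ν : I, ∀ t > (0 : ℝ), Measurable (L ν t))
    (hLbar : ∀ ν : I, ∀ t > (0 : ℝ), Measurable (Lbar ν t))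
    (lam : ℝ → ℝ) (hlam_pos : ∀ t > (0 : ℝ), 0 < lam t)
    (hlam : Tendsto lam atTop atTop)
    (J : E → ℝ≥0∞) (hJ : ∀ r : NNReal, IsCompact {x : E | J x ≤ r})
    -- (i) uniform lower bound for `Lbar`
    (hlower : ∀ A : Set E, IsOpen A →
      -(⨅ x ∈ A, (J x : EReal)) ≤
        liminf (fun t : ℝ =>
          ((1 / lam t : ℝ) : EReal) *
            ⨅ ν : I, ENNReal.log (P {ω | Lbar ν t ω ∈ A})) atTop)
    -- (ii) superexponential approximation
    (happrox : ∀ δ > (0 : ℝ),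
      Tendsto (fun t : ℝ =>
          ((1 / lam t : ℝ) : EReal) *
            ⨆ ν : I, ENNReal.log (P {ω | δ < dist (L ν t ω) (Lbar ν t ω)}))
        atTop (nhds (⊥ : EReal))) :
    ∀ A : Set E, IsOpen A →
      -(⨅ x ∈ A, (J x : EReal)) ≤
        liminf (fun t : ℝ =>
          ((1 / lam t : ℝ) : EReal) *
            ⨅ ν : I, ENNReal.log (P {ω | L ν t ω ∈ A})) atTop :=
  approximation_lemma_lower_general P L Lbar lam hlam J hlower happrox
end

section
/- Comparison theorem for uniform large deviation lower bounds (Theorem 4.1, lower bound, abstract form): Let (E, ρ) be a separable metric space, I and I' nonempty index sets, Ψ : I → I' a map, (Ω, 𝓕, P) a probability space, and for each t > 0 let L_t^ν (ν ∈ I) and L̄_t^{ν'} (ν' ∈ I') be Borel-measurable maps from Ω to E. Let J : E → [0,∞] have compact level sets. Assume: (i) for every open set A ⊆ E, liminf_{t→∞} (1/t) · inf_{ν'∈Ψ(I)} log P(L̄_t^{ν'} ∈ A) ≥ −inf_{x∈A} J(x); (ii) for each ν ∈ I there is a jointly measurable g^ν : Ω × [0,∞) → [0,1] such that for every t > 0,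 ρ(L_t^ν, L̄_t^{Ψ(ν)}) ≤ (1/t) · ∫₀^t g^ν(·, s) ds holds P-almost surely; and (iii) for every real N ≥ 1, sup_{ν∈I} E[exp(N · ∫₀^∞ g^ν(·, s) ds)] < ∞. Then for every open set A ⊆ E, liminf_{t→∞} (1/t) · inf_{ν∈I} log P(L_t^ν ∈ A) ≥ −inf_{x∈A} J(x). -/
/-!
Fix `x ∈ A` with `B(x, ε) ⊆ A`. Off the event `{∫₀^∞ g^ν ≥ ε t / 2}`, the event
`L̄_t^{Ψν} ∈ B(x, ε/2)` forces `L_t^ν ∈ A`, and by the exponential Chebyshev inequality that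
event has probability at most `C_N e^{-N ε t / 2}`, uniformly in `ν`. Taking `N` so large that
this decays faster than the lower bound `e^{b t}` (any `b < -J x`) for `P(L̄_t^{Ψν} ∈ B(x, ε/2))`,
`P(L_t^ν ∈ A)` obeys the lower bound `e^{a t}` for every `a < b`.
-/

open MeasureTheory Filter Set
open scoped ENNReal Topology

/-- The exponential function on `ℝ≥0∞`, with the convention `exp (+∞) = +∞`. -/
noncomputable def expENN (x : ℝ≥0∞) : ℝ≥0∞ :=
  if x = ⊤ then ⊤ else ENNReal.ofReal (Real.exp x.toReal)

lemma expENN_ofReal {x : ℝ} (hx : 0 ≤ x) :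
    expENN (ENNReal.ofReal x) = ENNReal.ofReal (Real.exp x) := by
  rw [expENN, if_neg ENNReal.ofReal_ne_top, ENNReal.toReal_ofReal hx]

lemma expENN_mono : Monotone expENN := by
  intro x y hxy
  unfold expENN
  split_ifs with hx hy hy
  · exact le_rfl
  · exact absurd (top_le_iff.mp (hx ▸ hxy)) hy
  · exact le_top
  · exact ENNReal.ofReal_le_ofReal (Real.exp_le_exp.mpr (ENNReal.toReal_mono hy hxy))

lemma measurable_expENN : Measurable expENN :=
  Measurable.ite (measurableSet_singleton ⊤) measurable_const
    (ENNReal.measurable_ofReal.comp (Real.measurable_exp.comp ENNReal.measurable_toReal))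

lemma ENNReal.ofReal_exp_le_iff_le_log {y : ℝ} {p : ℝ≥0∞} :
    ENNReal.ofReal (Real.exp y) ≤ p ↔ (y : EReal) ≤ ENNReal.log p := by
  rw [← ENNReal.log_le_log_iff, ENNReal.log_ofReal_of_pos (Real.exp_pos y), Real.log_exp]

lemma ENNReal.ofReal_mul_le_of_le_inv_mul {a t : ℝ} {y : ℝ≥0∞} (ht : 0 < t)
    (h : ENNReal.ofReal a ≤ (ENNReal.ofReal t)⁻¹ * y) : ENNReal.ofReal (a * t) ≤ y := by
  rw [← ENNReal.div_eq_inv_mul,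
    ENNReal.le_div_iff_mul_le (.inl (ENNReal.ofReal_pos.mpr ht).ne') (.inl ENNReal.ofReal_ne_top)]
    at h
  rwa [ENNReal.ofReal_mul' ht.le]

lemma ENNReal.exists_nonneg_forall_le_ofReal_of_iSup_lt_top {ι : Type*} {f : ι → ℝ≥0∞}
    (hf : ⨆ i, f i < ⊤) : ∃ C : ℝ, 0 ≤ C ∧ ∀ i, f i ≤ ENNReal.ofReal C :=
  ⟨_, ENNReal.toReal_nonneg, fun i => (le_iSup f i).trans (ENNReal.ofReal_toReal hf.ne).ge⟩

lemma EReal.coe_le_one_div_mul_iff_s4 {a t : ℝ} (ht : 0 < t) (x : EReal) :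
    (a : EReal) ≤ ((1 / t : ℝ) : EReal) * x ↔ ((a * t : ℝ) : EReal) ≤ x := by
  have ht' : (0 : ℝ) < 1 / t := by positivity
  induction x using EReal.rec with
  | bot =>
    rw [EReal.coe_mul_bot_of_pos ht']
    simp only [le_bot_iff, EReal.coe_ne_bot]
  | coe y =>
    rw [← EReal.coe_mul, EReal.coe_le_coe_iff, EReal.coe_le_coe_iff, one_div, inv_mul_eq_div,
      le_div_iff₀ ht]
  | top =>
    rw [EReal.coe_mul_top_of_pos ht']
    simp only [le_top]

lemma coe_le_one_div_mul_iInf_log_iff {ι : Type*} {f : ι → ℝ≥0∞} {a t : ℝ} (ht : 0 < t) :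
    (a : EReal) ≤ ((1 / t : ℝ) : EReal) * ⨅ i, ENNReal.log (f i) ↔
      ∀ i, ENNReal.ofReal (Real.exp (a * t)) ≤ f i := by
  simp only [EReal.coe_le_one_div_mul_iff_s4 ht, le_iInf_iff, ENNReal.ofReal_exp_le_iff_le_log]

lemma le_liminf_one_div_mul_iInf_log {ι : Type*} {f : ι → ℝ → ℝ≥0∞} {c : EReal}
    (h : ∀ a : ℝ, (a : EReal) < c →
      ∀ᶠ t in atTop, ∀ i, ENNReal.ofReal (Real.exp (a * t)) ≤ f i t) :
    c ≤ liminf (fun t : ℝ => ((1 / t : ℝ) : EReal) * ⨅ i, ENNReal.log (f i t)) atTop := by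
  refine EReal.ge_of_forall_gt_iff_ge.mp fun a ha => le_liminf_of_le (by isBoundedDefault) ?_
  filter_upwards [h a ha, eventually_gt_atTop 0] with t hft ht
  exact (coe_le_one_div_mul_iInf_log_iff ht).mpr hft

lemma eventually_ofReal_exp_le_of_lt_liminf {ι : Type*} {f : ι → ℝ → ℝ≥0∞} {a : ℝ}
    (h : (a : EReal) < liminf (fun t : ℝ => ((1 / t : ℝ) : EReal) * ⨅ i, ENNReal.log (f i t))
      atTop) :
    ∀ᶠ t in atTop, ∀ i, ENNReal.ofReal (Real.exp (a * t)) ≤ f i t := by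
  filter_upwards [eventually_lt_of_lt_liminf h, eventually_gt_atTop 0] with t hft ht
  exact (coe_le_one_div_mul_iInf_log_iff ht).mp hft.le

lemma Real.eventually_exp_add_mul_exp_le {a b c : ℝ} (C : ℝ) (hab : a < b) (hcb : c < b) :
    ∀ᶠ t in atTop, Real.exp (a * t) + C * Real.exp (c * t) ≤ Real.exp (b * t) := by
  have hdecay : ∀ {d : ℝ}, d < 0 → Tendsto (fun t => Real.exp (d * t)) atTop (𝓝 0) :=
    fun hd => Real.tendsto_exp_atBot.comp (tendsto_id.const_mul_atTop_of_neg hd)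
  have hsum : Tendsto (fun t => Real.exp ((a - b) * t) + C * Real.exp ((c - b) * t)) atTop
      (𝓝 0) := by
    simpa using (hdecay (sub_neg.mpr hab)).add ((hdecay (sub_neg.mpr hcb)).const_mul C)
  filter_upwards [hsum.eventually (ge_mem_nhds one_pos)] with t ht
  have hexp : ∀ d, Real.exp (d * t) = Real.exp ((d - b) * t) * Real.exp (b * t) := fun d => by
    rw [← Real.exp_add]; ring_nf
  rw [hexp a, hexp c]
  nlinarith [Real.exp_pos (b * t)]

lemma measure_le_ofReal_exp_mul_lintegral_expENN {Ω : Type*} [MeasurableSpace Ω]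
    {μ : Measure Ω} {G : Ω → ℝ≥0∞} (hG : AEMeasurable G μ) {N u : ℝ} (hN : 0 ≤ N)
    (hu : 0 ≤ u) :
    μ {ω | ENNReal.ofReal u ≤ G ω} ≤
      ENNReal.ofReal (Real.exp (-(N * u))) * ∫⁻ ω, expENN (ENNReal.ofReal N * G ω) ∂μ := by
  have hmarkov := mul_meas_ge_le_lintegral₀
    (measurable_expENN.comp_aemeasurable (hG.const_mul (ENNReal.ofReal N)))
    (ENNReal.ofReal (Real.exp (N * u)))
  have hsub : {ω | ENNReal.ofReal u ≤ G ω} ⊆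
      {ω | ENNReal.ofReal (Real.exp (N * u)) ≤ expENN (ENNReal.ofReal N * G ω)} := by
    intro ω (hω : ENNReal.ofReal u ≤ G ω)
    show _ ≤ expENN _
    rw [← expENN_ofReal (by positivity), ENNReal.ofReal_mul hN]
    exact expENN_mono (by gcongr)
  calc μ {ω | ENNReal.ofReal u ≤ G ω}
      = ENNReal.ofReal (Real.exp (-(N * u))) *
          (ENNReal.ofReal (Real.exp (N * u)) * μ {ω | ENNReal.ofReal u ≤ G ω}) := by
        rw [← mul_assoc, ← ENNReal.ofReal_mul (Real.exp_pos _).le, ← Real.exp_add,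
          neg_add_cancel, Real.exp_zero, ENNReal.ofReal_one, one_mul]
    _ ≤ _ := by
        gcongr
        exact (mul_le_mul_right (measure_mono hsub) _).trans hmarkov

lemma measure_mem_ball_le_add {Ω E : Type*} [MeasurableSpace Ω] [PseudoMetricSpace E]
    {μ : Measure Ω} {X Y : Ω → E} {D : Ω → ℝ≥0∞}
    (hXY : ∀ᵐ ω ∂μ, ENNReal.ofReal (dist (X ω) (Y ω)) ≤ D ω) (x : E) (r η : ℝ) :
    μ {ω | Y ω ∈ Metric.ball x r} ≤
      μ {ω | X ω ∈ Metric.ball x (r + η)} + μ {ω | ENNReal.ofReal η ≤ D ω} := by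
  refine (measure_mono_ae ?_).trans (measure_union_le _ _)
  filter_upwards [hXY] with ω hω hY
  by_cases hd : dist (X ω) (Y ω) < η
  · left
    calc dist (X ω) x ≤ dist (X ω) (Y ω) + dist (Y ω) x := dist_triangle _ _ _
      _ < r + η := by linarith [Metric.mem_ball.mp hY]
  · exact Or.inr ((ENNReal.ofReal_le_ofReal (not_lt.mp hd)).trans hω)

lemma measure_mem_ball_le_of_dist_le_time_average {Ω E : Type*} [MeasurableSpace Ω]
    [PseudoMetricSpace E] {μ : Measure Ω} {X Y : Ω → E} {g : Ω → ℝ → ℝ}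
    (hg : Measurable (Function.uncurry g)) {t : ℝ} (ht : 0 < t)
    (hXY : ∀ᵐ ω ∂μ, ENNReal.ofReal (dist (X ω) (Y ω)) ≤
      (ENNReal.ofReal t)⁻¹ * ∫⁻ s in Icc 0 t, ENNReal.ofReal (g ω s))
    {N C : ℝ} (hN : 0 ≤ N)
    (hC : ∫⁻ ω, expENN (ENNReal.ofReal N * ∫⁻ s in Ici 0, ENNReal.ofReal (g ω s)) ∂μ ≤
      ENNReal.ofReal C)
    (x : E) (r : ℝ) {η : ℝ} (hη : 0 ≤ η) :
    μ {ω | Y ω ∈ Metric.ball x r} ≤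
      μ {ω | X ω ∈ Metric.ball x (r + η)} + ENNReal.ofReal (C * Real.exp (-(N * η) * t)) := by
  set G : Ω → ℝ≥0∞ := fun ω => ∫⁻ s in Ici 0, ENNReal.ofReal (g ω s)
  have hG : Measurable G := (ENNReal.measurable_ofReal.comp hg).lintegral_prod_right'
  have hXG : ∀ᵐ ω ∂μ, ENNReal.ofReal (dist (X ω) (Y ω)) ≤ (ENNReal.ofReal t)⁻¹ * G ω := by
    filter_upwards [hXY] with ω hω
    exact hω.trans (mul_le_mul_right (lintegral_mono_set Icc_subset_Ici_self) _)
  calc _ ≤ μ {ω | X ω ∈ Metric.ball x (r + η)} +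
        μ {ω | ENNReal.ofReal η ≤ (ENNReal.ofReal t)⁻¹ * G ω} := measure_mem_ball_le_add hXG x _ _
    _ ≤ μ {ω | X ω ∈ Metric.ball x (r + η)} + μ {ω | ENNReal.ofReal (η * t) ≤ G ω} :=
        add_le_add_right (measure_mono fun ω hω => ENNReal.ofReal_mul_le_of_le_inv_mul ht hω) _
    _ ≤ μ {ω | X ω ∈ Metric.ball x (r + η)} +
        ENNReal.ofReal (Real.exp (-(N * (η * t)))) * ENNReal.ofReal C :=
        add_le_add_right ((measure_le_ofReal_exp_mul_lintegral_expENN hG.aemeasurable hN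
          (by positivity)).trans (mul_le_mul_right hC _)) _
    _ = _ := by rw [← ENNReal.ofReal_mul (Real.exp_pos _).le, mul_comm, neg_mul, mul_assoc]

lemma eventually_ofReal_exp_le_of_le_add {ι : Type*} {p q : ι → ℝ → ℝ≥0∞} {a b c C : ℝ}
    (hC : 0 ≤ C) (hab : a < b) (hcb : c < b)
    (hq : ∀ᶠ t in atTop, ∀ i, ENNReal.ofReal (Real.exp (b * t)) ≤ q i t)
    (hqp : ∀ᶠ t in atTop, ∀ i, q i t ≤ p i t + ENNReal.ofReal (C * Real.exp (c * t))) :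
    ∀ᶠ t in atTop, ∀ i, ENNReal.ofReal (Real.exp (a * t)) ≤ p i t := by
  filter_upwards [hq, hqp, Real.eventually_exp_add_mul_exp_le C hab hcb] with t hq hqp hexp i
  refine ENNReal.le_of_add_le_add_right (ENNReal.ofReal_ne_top (r := C * Real.exp (c * t))) ?_
  calc _ = ENNReal.ofReal (Real.exp (a * t) + C * Real.exp (c * t)) :=
        (ENNReal.ofReal_add (Real.exp_pos _).le (by positivity)).symm
    _ ≤ ENNReal.ofReal (Real.exp (b * t)) := ENNReal.ofReal_le_ofReal hexp
    _ ≤ _ := (hq i).trans (hqp i)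

theorem comparison_theorem_lower_general
    {E : Type*} [MetricSpace E]
    {I I' : Type*} (Ψ : I → I')
    {Ω : Type*} [MeasurableSpace Ω] (P : Measure Ω)
    (L : I → ℝ → Ω → E) (Lbar : I' → ℝ → Ω → E)
    (J : E → ℝ≥0∞)
    -- (i) uniform lower bound for the reference family, over `Ψ(I)`
    (hlower : ∀ A : Set E, IsOpen A →
      -(⨅ x ∈ A, (J x : EReal)) ≤
        liminf (fun t : ℝ =>
          ((1 / t : ℝ) : EReal) *
            ⨅ ν' ∈ Set.range Ψ, ENNReal.log (P {ω | Lbar ν' t ω ∈ A})) atTop)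
    -- (ii)+(iii) domination by a process with uniform exponential moments
    (hdom : ∃ g : I → Ω → ℝ → ℝ,
      (∀ ν : I, Measurable (Function.uncurry (g ν))) ∧
      (∀ (ν : I) (ω : Ω) (s : ℝ), g ν ω s ∈ Set.Icc (0 : ℝ) 1) ∧
      (∀ ν : I, ∀ t > (0 : ℝ), ∀ᵐ ω ∂P,
        ENNReal.ofReal (dist (L ν t ω) (Lbar (Ψ ν) t ω)) ≤
          (ENNReal.ofReal t)⁻¹ *
            ∫⁻ s in Set.Icc (0 : ℝ) t, ENNReal.ofReal (g ν ω s)) ∧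
      (∀ N : ℝ, 1 ≤ N →
        (⨆ ν : I, ∫⁻ ω, expENN (ENNReal.ofReal N *
            ∫⁻ s in Set.Ici (0 : ℝ), ENNReal.ofReal (g ν ω s)) ∂P) < ⊤)) :
    ∀ A : Set E, IsOpen A →
      -(⨅ x ∈ A, (J x : EReal)) ≤
        liminf (fun t : ℝ =>
          ((1 / t : ℝ) : EReal) *
            ⨅ ν : I, ENNReal.log (P {ω | L ν t ω ∈ A})) atTop := by
  intro A hA
  obtain ⟨g, hg_meas, -, hg_dom, hg_exp⟩ := hdom
  rw [EReal.neg_le]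
  refine le_iInf₂ fun x hx => EReal.neg_le.mp ?_
  obtain ⟨ε, hε, hball⟩ := Metric.isOpen_iff.mp hA x hx
  refine le_liminf_one_div_mul_iInf_log fun a ha => ?_
  obtain ⟨b, hab, hb⟩ := EReal.exists_between_coe_real ha
  have hbar : ∀ᶠ t in atTop, ∀ ν, ENNReal.ofReal (Real.exp (b * t)) ≤
      P {ω | Lbar (Ψ ν) t ω ∈ Metric.ball x (ε / 2)} := by
    refine eventually_ofReal_exp_le_of_lt_liminf (hb.trans_le ?_)
    have hlower_ball := hlower _ (Metric.isOpen_ball (x := x) (ε := ε / 2))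
    simp only [iInf_range] at hlower_ball
    exact (EReal.neg_le_neg_iff.mpr (iInf₂_le x (Metric.mem_ball_self (half_pos hε)))).trans
      hlower_ball
  obtain ⟨N, hN1, hNb⟩ : ∃ N : ℝ, 1 ≤ N ∧ -b < N * (ε / 2) :=
    ((eventually_ge_atTop 1).and
      ((tendsto_id.atTop_mul_const (half_pos hε)).eventually_gt_atTop (-b))).exists
  obtain ⟨C, hC0, hC⟩ := ENNReal.exists_nonneg_forall_le_ofReal_of_iSup_lt_top (hg_exp N hN1)
  have hcompare : ∀ᶠ t in atTop, ∀ ν, P {ω | Lbar (Ψ ν) t ω ∈ Metric.ball x (ε / 2)} ≤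
      P {ω | L ν t ω ∈ A} + ENNReal.ofReal (C * Real.exp (-(N * (ε / 2)) * t)) := by
    filter_upwards [eventually_gt_atTop 0] with t ht ν
    refine (measure_mem_ball_le_of_dist_le_time_average (hg_meas ν) ht (hg_dom ν t ht)
      (by positivity) (hC ν) x (ε / 2) (half_pos hε).le).trans ?_
    rw [add_halves]
    gcongr
  exact eventually_ofReal_exp_le_of_le_add hC0 (EReal.coe_lt_coe_iff.mp hab) (neg_lt.mp hNb)
    hbar hcompare

/-- **Comparison theorem for uniform LDP, lower bound** (Theorem 4.1 of the paper,
abstract form). If the reference family `Lbar` (indexed over `Ψ(I)`) satisfies the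
uniform large deviation lower bound with rate function `J`, and `ρ(L_t^ν, L̄_t^{Ψν})`
is dominated by the time average of a `[0,1]`-valued process `g^ν` having uniformly
finite exponential moments, then `L` satisfies the same uniform lower bound. -/
theorem comparison_theorem_lower
    {E : Type*} [MetricSpace E] [TopologicalSpace.SeparableSpace E]
    [MeasurableSpace E] [BorelSpace E]
    {I I' : Type*} [Nonempty I] [Nonempty I'] (Ψ : I → I')
    {Ω : Type*} [MeasurableSpace Ω] (P : Measure Ω) [IsProbabilityMeasure P]
    (L : I → ℝ → Ω → E) (Lbar : I' → ℝ → Ω → E)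
    (hL : ∀ ν : I, ∀ t > (0 : ℝ), Measurable (L ν t))
    (hLbar : ∀ ν' : I', ∀ t > (0 : ℝ), Measurable (Lbar ν' t))
    (J : E → ℝ≥0∞) (hJ : ∀ r : NNReal, IsCompact {x : E | J x ≤ r})
    -- (i) uniform lower bound for the reference family, over `Ψ(I)`
    (hlower : ∀ A : Set E, IsOpen A →
      -(⨅ x ∈ A, (J x : EReal)) ≤
        liminf (fun t : ℝ =>
          ((1 / t : ℝ) : EReal) *
            ⨅ ν' ∈ Set.range Ψ, ENNReal.log (P {ω | Lbar ν' t ω ∈ A})) atTop)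
    -- (ii)+(iii) domination by a process with uniform exponential moments
    (hdom : ∃ g : I → Ω → ℝ → ℝ,
      (∀ ν : I, Measurable (Function.uncurry (g ν))) ∧
      (∀ (ν : I) (ω : Ω) (s : ℝ), g ν ω s ∈ Set.Icc (0 : ℝ) 1) ∧
      (∀ ν : I, ∀ t > (0 : ℝ), ∀ᵐ ω ∂P,
        ENNReal.ofReal (dist (L ν t ω) (Lbar (Ψ ν) t ω)) ≤
          (ENNReal.ofReal t)⁻¹ *
            ∫⁻ s in Set.Icc (0 : ℝ) t, ENNReal.ofReal (g ν ω s)) ∧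
      (∀ N : ℝ, 1 ≤ N →
        (⨆ ν : I, ∫⁻ ω, expENN (ENNReal.ofReal N *
            ∫⁻ s in Set.Ici (0 : ℝ), ENNReal.ofReal (g ν ω s)) ∂P) < ⊤)) :
    ∀ A : Set E, IsOpen A →
      -(⨅ x ∈ A, (J x : EReal)) ≤
        liminf (fun t : ℝ =>
          ((1 / t : ℝ) : EReal) *
            ⨅ ν : I, ENNReal.log (P {ω | L ν t ω ∈ A})) atTop :=
  comparison_theorem_lower_general Ψ P L Lbar J hlower hdom
end

section
/- Example 2.2 (verification of the monotonicity condition (H₁)): Let m ≥ 1, equip ℝ^m with the Euclidean inner product and ℝ^m × ℝ^m with the product inner product. Let λ > 0, α₁, α₂, α₃ ≥ 0, let P be an arbitrary type, and let Z : (ℝ^m × ℝ^m) × P → ℝ^m. Define b((x^{(1)}, x^{(2)}), ν) := (x^{(2)} − λ x^{(1)}, Z((x^{(1)}, x^{(2)}), ν) − λ x^{(2)}). If 4λ > inf_{s>0} { 2α₃ s + α₃ s^{-1} + 2α₂ + √(4(1+α₁)² + (2α₂ + α₃ s^{-1})²) }, then there exist constants κ₁ > κ₂ ≥ 0 such that for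 all x₁, x₂ ∈ ℝ^m × ℝ^m, all ν₁, ν₂ ∈ P and all w ≥ 0 satisfying |Z(x₁, ν₁) − Z(x₂, ν₂)| ≤ α₁|x₁^{(1)} − x₂^{(1)}| + α₂|x₁^{(2)} − x₂^{(2)}| + α₃ w, one has 2⟨b(x₁, ν₁) − b(x₂, ν₂), x₁ − x₂⟩ ≤ −κ₁ |x₁ − x₂|² + κ₂ w². -/
open scoped RealInnerProductSpace

/-- **Example 2.2 of the paper: verification of the monotonicity condition (H₁).**
Here `ℝ^m × ℝ^m` carries the product inner product, written out as the sum of the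
inner products of the components, and `|x₁ - x₂|² = ‖x₁⁽¹⁾-x₂⁽¹⁾‖² + ‖x₁⁽²⁾-x₂⁽²⁾‖²`. -/
theorem example22_H1
    {m : ℕ} (hm : 1 ≤ m) {P : Type*}
    (lam α₁ α₂ α₃ : ℝ) (hlam : 0 < lam) (hα₁ : 0 ≤ α₁) (hα₂ : 0 ≤ α₂) (hα₃ : 0 ≤ α₃)
    (Z : (EuclideanSpace ℝ (Fin m) × EuclideanSpace ℝ (Fin m)) → P →
      EuclideanSpace ℝ (Fin m))
    (b : (EuclideanSpace ℝ (Fin m) × EuclideanSpace ℝ (Fin m)) → P →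
      EuclideanSpace ℝ (Fin m) × EuclideanSpace ℝ (Fin m))
    (hb : ∀ x ν, b x ν = (x.2 - lam • x.1, Z x ν - lam • x.2))
    (hcond : sInf ((fun s : ℝ =>
        2 * α₃ * s + α₃ * s⁻¹ + 2 * α₂ +
          Real.sqrt (4 * (1 + α₁) ^ 2 + (2 * α₂ + α₃ * s⁻¹) ^ 2)) '' Set.Ioi 0)
      < 4 * lam) :
    ∃ κ₁ κ₂ : ℝ, 0 ≤ κ₂ ∧ κ₂ < κ₁ ∧
      ∀ (x₁ x₂ : EuclideanSpace ℝ (Fin m) × EuclideanSpace ℝ (Fin m))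
        (ν₁ ν₂ : P) (w : ℝ), 0 ≤ w →
        ‖Z x₁ ν₁ - Z x₂ ν₂‖ ≤
          α₁ * ‖x₁.1 - x₂.1‖ + α₂ * ‖x₁.2 - x₂.2‖ + α₃ * w →
        2 * (⟪(b x₁ ν₁).1 - (b x₂ ν₂).1, x₁.1 - x₂.1⟫ +
              ⟪(b x₁ ν₁).2 - (b x₂ ν₂).2, x₁.2 - x₂.2⟫) ≤
          -κ₁ * (‖x₁.1 - x₂.1‖ ^ 2 + ‖x₁.2 - x₂.2‖ ^ 2) + κ₂ * w ^ 2 := by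
  have hne : ((fun s : ℝ =>
      2 * α₃ * s + α₃ * s⁻¹ + 2 * α₂ +
        Real.sqrt (4 * (1 + α₁) ^ 2 + (2 * α₂ + α₃ * s⁻¹) ^ 2)) '' Set.Ioi 0).Nonempty :=
    ⟨_, Set.mem_image_of_mem _ (by norm_num : (1:ℝ) ∈ Set.Ioi 0)⟩
  obtain ⟨y, ⟨s, hs, rfl⟩, hy⟩ := exists_lt_of_csInf_lt hne hcond
  rw [Set.mem_Ioi] at hs
  dsimp only at hy
  obtain ⟨σ, hσdef⟩ : ∃ x : ℝ, x = s⁻¹ := ⟨_, rfl⟩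
  have hσ : 0 < σ := hσdef ▸ inv_pos.mpr hs
  have hsσ : s * σ = 1 := by rw [hσdef]; exact mul_inv_cancel₀ hs.ne'
  have he0 : 0 ≤ α₂ + α₃ * σ / 2 := by positivity
  obtain ⟨r, hrdef⟩ : ∃ x : ℝ,
      x = Real.sqrt ((1 + α₁) ^ 2 + (α₂ + α₃ * σ / 2) ^ 2) := ⟨_, rfl⟩
  have hr0 : 0 ≤ r := hrdef ▸ Real.sqrt_nonneg _
  have hr2 : r ^ 2 = (1 + α₁) ^ 2 + (α₂ + α₃ * σ / 2) ^ 2 := by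
    rw [hrdef]; exact Real.sq_sqrt (by positivity)
  have hrd : α₂ + α₃ * σ / 2 ≤ r := by nlinarith
  have hr1 : 1 + α₁ ≤ r := by nlinarith
  -- rewrite the square root in hy
  rw [← hσdef] at hy
  have hsqrt : Real.sqrt (4 * (1 + α₁) ^ 2 + (2 * α₂ + α₃ * σ) ^ 2) = 2 * r := by
    have h4 : 4 * (1 + α₁) ^ 2 + (2 * α₂ + α₃ * σ) ^ 2 = (2 * r) ^ 2 := by
      rw [mul_pow, hr2]; ring
    rw [h4, Real.sqrt_sq (by positivity)]
  rw [hsqrt] at hy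
  refine ⟨2 * lam - (α₂ + α₃ * σ / 2) - r, α₃ * s, mul_nonneg hα₃ hs.le, by linarith, ?_⟩
  intro x₁ x₂ ν₁ ν₂ w hw hZ
  have h1 : ⟪(b x₁ ν₁).1 - (b x₂ ν₂).1, x₁.1 - x₂.1⟫ =
      ⟪x₁.2 - x₂.2, x₁.1 - x₂.1⟫ - lam * ‖x₁.1 - x₂.1‖ ^ 2 := by
    rw [hb, hb]
    simp only [← real_inner_self_eq_norm_sq, inner_sub_left, inner_sub_right,
      real_inner_smul_left]
    ring
  have h2 : ⟪(b x₁ ν₁).2 - (b x₂ ν₂).2, x₁.2 - x₂.2⟫ =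
      ⟪Z x₁ ν₁ - Z x₂ ν₂, x₁.2 - x₂.2⟫ - lam * ‖x₁.2 - x₂.2‖ ^ 2 := by
    rw [hb, hb]
    simp only [← real_inner_self_eq_norm_sq, inner_sub_left, inner_sub_right,
      real_inner_smul_left]
    ring
  rw [h1, h2]
  set a : ℝ := ‖x₁.1 - x₂.1‖ with ha
  set c : ℝ := ‖x₁.2 - x₂.2‖ with hc
  clear_value a c
  have ha0 : 0 ≤ a := by rw [ha]; exact norm_nonneg _
  have hc0 : 0 ≤ c := by rw [hc]; exact norm_nonneg _
  -- Cauchy–Schwarz bounds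
  have hi1 : ⟪x₁.2 - x₂.2, x₁.1 - x₂.1⟫ ≤ c * a := by
    rw [ha, hc]; exact real_inner_le_norm _ _
  have hi2 : ⟪Z x₁ ν₁ - Z x₂ ν₂, x₁.2 - x₂.2⟫ ≤ (α₁ * a + α₂ * c + α₃ * w) * c := by
    calc ⟪Z x₁ ν₁ - Z x₂ ν₂, x₁.2 - x₂.2⟫ ≤ ‖Z x₁ ν₁ - Z x₂ ν₂‖ * c := by
          rw [hc]; exact real_inner_le_norm _ _
      _ ≤ (α₁ * a + α₂ * c + α₃ * w) * c :=
          mul_le_mul_of_nonneg_right hZ hc0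
  -- Young inequality for the w-term
  have hyoung : 2 * (α₃ * w) * c ≤ α₃ * σ * c ^ 2 + α₃ * s * w ^ 2 := by
    have key : α₃ * σ * c ^ 2 + α₃ * s * w ^ 2 - 2 * (α₃ * w) * c
        = α₃ * s * (σ * c - w) ^ 2 := by
      linear_combination (2 * α₃ * c * w - α₃ * σ * c ^ 2) * hsσ
    have h0 : 0 ≤ α₃ * s * (σ * c - w) ^ 2 :=
      mul_nonneg (mul_nonneg hα₃ hs.le) (sq_nonneg _)
    linarith [key, h0]
  -- quadratic-form inequality
  have hre : 0 < r + (α₂ + α₃ * σ / 2) := by nlinarith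
  have hq : 2 * (1 + α₁) * a * c ≤
      (r + (α₂ + α₃ * σ / 2)) * a ^ 2 + (r - (α₂ + α₃ * σ / 2)) * c ^ 2 := by
    have hprod : (r + (α₂ + α₃ * σ / 2)) *
        ((r + (α₂ + α₃ * σ / 2)) * a ^ 2 + (r - (α₂ + α₃ * σ / 2)) * c ^ 2
          - 2 * (1 + α₁) * a * c)
        = ((r + (α₂ + α₃ * σ / 2)) * a - (1 + α₁) * c) ^ 2
          + (r ^ 2 - (1 + α₁) ^ 2 - (α₂ + α₃ * σ / 2) ^ 2) * c ^ 2 := by ring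
    have hz : r ^ 2 - (1 + α₁) ^ 2 - (α₂ + α₃ * σ / 2) ^ 2 = 0 := by rw [hr2]; ring
    have hpos : 0 ≤ (r + (α₂ + α₃ * σ / 2)) *
        ((r + (α₂ + α₃ * σ / 2)) * a ^ 2 + (r - (α₂ + α₃ * σ / 2)) * c ^ 2
          - 2 * (1 + α₁) * a * c) := by
      rw [hprod, hz]
      simpa using sq_nonneg ((r + (α₂ + α₃ * σ / 2)) * a - (1 + α₁) * c)
    have hdiv : 0 ≤ (r + (α₂ + α₃ * σ / 2)) * a ^ 2 + (r - (α₂ + α₃ * σ / 2)) * c ^ 2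
          - 2 * (1 + α₁) * a * c :=
      nonneg_of_mul_nonneg_right hpos hre
    linarith [hdiv]
  linarith [hi1, hi2, hyoung, hq]
end

section
/- Uniform-in-initial-condition bound for a superlinearly damped differential inequality (used in the proof of Theorem 2.1(2), part (c)): For all constants c₁, c₂ > 0, γ > 0 and every t > 0, there exists a finite constant C = C(c₁, c₂, γ, t) such that every continuous function h : [0,∞) → [1,∞) satisfying h(t₂) ≤ h(t₁) + c₁(t₂ − t₁) − c₂ ∫_{t₁}^{t₂} h(s) (log h(s))^{1+γ} ds for all 0 ≤ t₁ ≤ t₂ satisfies h(t) ≤ C. In particular, the bound C does not depend on the initial value h(0). -/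
open MeasureTheory

/-- Continuity of the damping integrand. -/
lemma sl_integrand_contOn (γ : ℝ) (hγ : 0 < γ) (h : ℝ → ℝ)
    (hcont : ContinuousOn h (Set.Ici 0)) (hone : ∀ s, 0 ≤ s → 1 ≤ h s) :
    ContinuousOn (fun s => h s * Real.log (h s) ^ (1 + γ)) (Set.Ici (0:ℝ)) := by
  have hlog : ContinuousOn (fun s => Real.log (h s)) (Set.Ici (0:ℝ)) :=
    hcont.log (fun s hs => by have := hone s hs; linarith)
  have hrpow : Continuous (fun x : ℝ => x ^ (1 + γ)) :=
    Real.continuous_rpow_const (by linarith)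
  exact hcont.mul (hrpow.comp_continuousOn hlog)

/-- Descent estimate: while `h ≥ exp L`, the function decreases at rate at
least `c₂/2 · exp L · L^(1+γ)`. -/
lemma sl_descent (c₁ c₂ γ : ℝ) (hc₂ : 0 < c₂) (hγ : 0 < γ) (h : ℝ → ℝ)
    (hcont : ContinuousOn h (Set.Ici 0)) (hone : ∀ s, 0 ≤ s → 1 ≤ h s)
    (hineq : ∀ t₁ t₂ : ℝ, 0 ≤ t₁ → t₁ ≤ t₂ →
      h t₂ ≤ h t₁ + c₁ * (t₂ - t₁)
        - c₂ * ∫ s in t₁..t₂, h s * Real.log (h s) ^ (1 + γ))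
    (a b L : ℝ) (ha : 0 ≤ a) (hab : a ≤ b) (hL : 0 ≤ L)
    (hbig : ∀ s ∈ Set.Icc a b, Real.exp L ≤ h s)
    (hc₁L : c₁ ≤ c₂ / 2 * (Real.exp L * L ^ (1 + γ))) :
    h b ≤ h a - c₂ / 2 * (Real.exp L * L ^ (1 + γ)) * (b - a) := by
  have hsub : Set.Icc a b ⊆ Set.Ici (0:ℝ) := fun s hs => le_trans ha hs.1
  have hcint : IntervalIntegrable (fun s => h s * Real.log (h s) ^ (1 + γ)) volume a b := by
    apply ContinuousOn.intervalIntegrable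
    rw [Set.uIcc_of_le hab]
    exact (sl_integrand_contOn γ hγ h hcont hone).mono hsub
  have hconst : IntervalIntegrable (fun _ : ℝ => Real.exp L * L ^ (1 + γ)) volume a b :=
    intervalIntegrable_const
  have hmono : ∀ s ∈ Set.Icc a b,
      Real.exp L * L ^ (1 + γ) ≤ h s * Real.log (h s) ^ (1 + γ) := by
    intro s hs
    have h1 : Real.exp L ≤ h s := hbig s hs
    have hpos : (0:ℝ) < h s := lt_of_lt_of_le (Real.exp_pos L) h1
    have hlog : L ≤ Real.log (h s) := (Real.le_log_iff_exp_le hpos).2 h1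
    have h2 : L ^ (1 + γ) ≤ Real.log (h s) ^ (1 + γ) :=
      Real.rpow_le_rpow hL hlog (by linarith)
    exact mul_le_mul h1 h2 (Real.rpow_nonneg hL _) (le_of_lt hpos)
  have hint : Real.exp L * L ^ (1 + γ) * (b - a)
      ≤ ∫ s in a..b, h s * Real.log (h s) ^ (1 + γ) := by
    have := intervalIntegral.integral_mono_on hab hconst hcint hmono
    rw [intervalIntegral.integral_const, smul_eq_mul] at this
    linarith [this]
  have h0 := hineq a b ha hab
  have h1 := mul_le_mul_of_nonneg_right hc₁L (sub_nonneg.2 hab)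
  have h2 := mul_le_mul_of_nonneg_left hint (le_of_lt hc₂)
  nlinarith [h1, h2]

/-- Mean value theorem estimate used to sum the descent times. -/
lemma sl_mvt (γ x : ℝ) (hγ : 0 < γ) (hx : 1 ≤ x) :
    γ * (x + 1) ^ (-(1 + γ)) ≤ x ^ (-γ) - (x + 1) ^ (-γ) := by
  have hx0 : (0:ℝ) < x := lt_of_lt_of_le one_pos hx
  have hlt : x < x + 1 := by linarith
  obtain ⟨ξ, hξ, hslope⟩ := exists_hasDerivAt_eq_slope (fun y => y ^ (-γ))
      (fun y => (-γ) * y ^ (-γ - 1)) hlt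
      (fun y hy => (Real.continuousAt_rpow_const y (-γ)
        (Or.inl (by have := hy.1; intro h; rw [h] at this; linarith))).continuousWithinAt)
      (fun y hy => Real.hasDerivAt_rpow_const (Or.inl (by have := hy.1; intro h; rw [h] at this; linarith)))
  have hξ0 : (0:ℝ) < ξ := lt_trans hx0 hξ.1
  have hmonoξ : (x + 1) ^ (-γ - 1) ≤ ξ ^ (-γ - 1) :=
    Real.rpow_le_rpow_of_nonpos hξ0 (le_of_lt hξ.2) (by linarith)
  have hden : x + 1 - x = (1:ℝ) := by ring
  rw [hden, div_one] at hslope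
  have hkey : x ^ (-γ) - (x + 1) ^ (-γ) = γ * ξ ^ (-γ - 1) := by
    linarith [hslope]
  rw [hkey]
  have hexp : -(1 + γ) = -γ - 1 := by ring
  rw [hexp]
  exact mul_le_mul_of_nonneg_left hmonoξ (le_of_lt hγ)

/-- **Uniform-in-initial-condition bound for a superlinearly damped differential
inequality** (used in the proof of Theorem 2.1(2), part (c), of the paper).
Any continuous `h : [0,∞) → [1,∞)` satisfying the integral inequality
`h(t₂) ≤ h(t₁) + c₁(t₂-t₁) - c₂ ∫_{t₁}^{t₂} h (log h)^{1+γ}` is bounded at each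
time `t > 0` by a constant independent of `h(0)`. -/
theorem uniform_bound_superlinear_damping
    (c₁ c₂ γ t : ℝ) (hc₁ : 0 < c₁) (hc₂ : 0 < c₂) (hγ : 0 < γ) (ht : 0 < t) :
    ∃ C : ℝ, ∀ h : ℝ → ℝ,
      ContinuousOn h (Set.Ici (0 : ℝ)) →
      (∀ s, 0 ≤ s → 1 ≤ h s) →
      (∀ t₁ t₂ : ℝ, 0 ≤ t₁ → t₁ ≤ t₂ →
        h t₂ ≤ h t₁ + c₁ * (t₂ - t₁)
          - c₂ * ∫ s in t₁..t₂, h s * Real.log (h s) ^ (1 + γ)) →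
      h t ≤ C := by
  classical
  set E : ℝ := Real.exp 1 with hE
  have hE2 : (2:ℝ) ≤ E := by
    have h := Real.add_one_le_exp (1:ℝ)
    rw [hE]; linarith
  have hE1 : (0:ℝ) < E - 1 := by linarith
  -- choose the level K
  set B : ℝ := 2 * (E - 1) / (c₂ * γ * t) with hB
  have hBpos : 0 < B := by
    apply div_pos (by linarith) (by positivity)
  obtain ⟨K, hK⟩ := exists_nat_gt (max (max 2 (2 * c₁ / c₂)) (1 + B ^ (1 / γ)))
  have hK2 : (2:ℝ) ≤ (K:ℝ) := le_of_lt (lt_of_le_of_lt (le_max_of_le_left (le_max_left _ _)) hK)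
  have hKc : 2 * c₁ / c₂ ≤ (K:ℝ) :=
    le_of_lt (lt_of_le_of_lt (le_max_of_le_left (le_max_right _ _)) hK)
  have hKB : B ^ (1 / γ) ≤ (K:ℝ) - 1 := by
    have := lt_of_le_of_lt (le_max_right _ _) hK
    linarith
  -- tail bound for the total descent time
  have hK1pos : (0:ℝ) < (K:ℝ) - 1 := by linarith
  have htail : 2 * (E - 1) / (c₂ * γ) * ((K:ℝ) - 1) ^ (-γ) ≤ t := by
    have h1 : B ≤ ((K:ℝ) - 1) ^ γ := by
      have := Real.rpow_le_rpow (le_of_lt (Real.rpow_pos_of_pos hBpos _)) hKB (le_of_lt hγ)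
      rwa [← Real.rpow_mul (le_of_lt hBpos), one_div_mul_cancel (ne_of_gt hγ),
        Real.rpow_one] at this
    have h2 : ((K:ℝ) - 1) ^ (-γ) ≤ B⁻¹ := by
      rw [Real.rpow_neg (le_of_lt hK1pos)]
      exact inv_anti₀ hBpos h1
    have h3 : 2 * (E - 1) / (c₂ * γ) * ((K:ℝ) - 1) ^ (-γ)
        ≤ 2 * (E - 1) / (c₂ * γ) * B⁻¹ :=
      mul_le_mul_of_nonneg_left h2 (by positivity)
    have h4 : 2 * (E - 1) / (c₂ * γ) * B⁻¹ = t := by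
      rw [hB]
      field_simp
    linarith
  -- descent time for each band
  set δ : ℕ → ℝ := fun k => 2 * (E - 1) / c₂ * (k:ℝ) ^ (-(1 + γ)) with hδ
  set D : ℕ → ℝ := fun n => ∑ k ∈ Finset.Icc K n, δ k with hD
  have hδpos : ∀ k : ℕ, 1 ≤ k → 0 < δ k := by
    intro k hk
    have : (0:ℝ) < (k:ℝ) := by exact_mod_cast Nat.lt_of_lt_of_le Nat.zero_lt_one hk
    have h2 := Real.rpow_pos_of_pos this (-(1 + γ))
    simp only [hδ]
    exact mul_pos (div_pos (by linarith) hc₂) h2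
  have hK1 : 1 ≤ K := by exact_mod_cast le_trans (by norm_num : (1:ℝ) ≤ 2) hK2
  -- each band time is dominated by the telescoping term
  have hδle : ∀ k : ℕ, K ≤ k →
      δ k ≤ 2 * (E - 1) / (c₂ * γ) * (((k:ℝ) - 1) ^ (-γ) - (k:ℝ) ^ (-γ)) := by
    intro k hk
    have hk2 : (2:ℝ) ≤ (k:ℝ) := le_trans hK2 (by exact_mod_cast hk)
    have hx : (1:ℝ) ≤ (k:ℝ) - 1 := by linarith
    have := sl_mvt γ ((k:ℝ) - 1) hγ hx
    have hcast : ((k:ℝ) - 1) + 1 = (k:ℝ) := by ring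
    rw [hcast] at this
    simp only [hδ]
    have h5 : 2 * (E - 1) / (c₂ * γ) * (γ * (k:ℝ) ^ (-(1 + γ)))
        ≤ 2 * (E - 1) / (c₂ * γ) * (((k:ℝ) - 1) ^ (-γ) - (k:ℝ) ^ (-γ)) :=
      mul_le_mul_of_nonneg_left this (by positivity)
    have h6 : 2 * (E - 1) / (c₂ * γ) * (γ * (k:ℝ) ^ (-(1 + γ)))
        = 2 * (E - 1) / c₂ * (k:ℝ) ^ (-(1 + γ)) := by
      field_simp
    linarith
  -- total descent time bound
  have hDle : ∀ n : ℕ, K ≤ n →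
      D n ≤ 2 * (E - 1) / (c₂ * γ) * (((K:ℝ) - 1) ^ (-γ) - (n:ℝ) ^ (-γ)) := by
    intro n hn
    induction n, hn using Nat.le_induction with
    | base =>
      simp only [hD, Finset.Icc_self, Finset.sum_singleton]
      exact hδle K le_rfl
    | succ n hn ih =>
      have hstep : D (n + 1) = D n + δ (n + 1) := by
        simp only [hD]
        exact Finset.sum_Icc_succ_top (le_trans hn (Nat.le_succ n)) δ
      rw [hstep]
      have h7 := hδle (n + 1) (le_trans hn (Nat.le_succ n))
      have hcast : ((n + 1 : ℕ):ℝ) = (n:ℝ) + 1 := by push_cast; ring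
      rw [hcast] at h7
      have h8 : ((n:ℝ) + 1 - 1) = (n:ℝ) := by ring
      rw [h8] at h7
      push_cast
      linarith
  have hDt : ∀ n : ℕ, K ≤ n → D n ≤ t := by
    intro n hn
    have h9 := hDle n hn
    have hnpos : (0:ℝ) < (n:ℝ) := by
      exact_mod_cast Nat.lt_of_lt_of_le Nat.zero_lt_one (le_trans hK1 hn)
    have h10 : 0 ≤ (n:ℝ) ^ (-γ) := Real.rpow_nonneg (le_of_lt hnpos) _
    have h11 : 2 * (E - 1) / (c₂ * γ) * (((K:ℝ) - 1) ^ (-γ) - (n:ℝ) ^ (-γ))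
        ≤ 2 * (E - 1) / (c₂ * γ) * ((K:ℝ) - 1) ^ (-γ) :=
      mul_le_mul_of_nonneg_left (by linarith) (by positivity)
    linarith
  -- the decay constant at each band dominates c₁, and the drop computation
  have hc₁k : ∀ k : ℕ, K ≤ k → c₁ ≤ c₂ / 2 * (Real.exp (k:ℝ) * (k:ℝ) ^ (1 + γ)) := by
    intro k hk
    have hk1 : (1:ℝ) ≤ (k:ℝ) := le_trans (by norm_num) (le_trans hK2 (by exact_mod_cast hk))
    have h12 : (k:ℝ) ≤ (k:ℝ) ^ (1 + γ) := by
      have := Real.rpow_le_rpow_of_exponent_le hk1 (by linarith : (1:ℝ) ≤ 1 + γ)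
      rwa [Real.rpow_one] at this
    have h13 : (1:ℝ) ≤ Real.exp (k:ℝ) := Real.one_le_exp (by linarith)
    have h14 : (k:ℝ) ≤ Real.exp (k:ℝ) * (k:ℝ) ^ (1 + γ) := by
      nlinarith
    have h15 : 2 * c₁ / c₂ ≤ (k:ℝ) := le_trans hKc (by exact_mod_cast hk)
    have := mul_le_mul_of_nonneg_left (le_trans h15 h14) (le_of_lt (half_pos hc₂))
    calc c₁ = c₂ / 2 * (2 * c₁ / c₂) := by field_simp
    _ ≤ c₂ / 2 * (Real.exp (k:ℝ) * (k:ℝ) ^ (1 + γ)) := this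
  have hδcalc : ∀ k : ℕ, 1 ≤ k →
      c₂ / 2 * (Real.exp (k:ℝ) * (k:ℝ) ^ (1 + γ)) * δ k = (E - 1) * Real.exp (k:ℝ) := by
    intro k hk
    have hkpos : (0:ℝ) < (k:ℝ) := by exact_mod_cast Nat.lt_of_lt_of_le Nat.zero_lt_one hk
    have hrp : (0:ℝ) < (k:ℝ) ^ (1 + γ) := Real.rpow_pos_of_pos hkpos _
    simp only [hδ]
    rw [Real.rpow_neg (le_of_lt hkpos)]
    field_simp
  refine ⟨Real.exp (K:ℝ) + c₁ * t, ?_⟩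
  intro h hcont hone hineq
  -- main claim: h dips below exp K on [0, t]
  have key : ∃ s ∈ Set.Icc (0:ℝ) t, h s ≤ Real.exp (K:ℝ) := by
    by_contra hcon
    push_neg at hcon
    -- downward induction over bands
    have main : ∀ n : ℕ, K ≤ n → ∀ a : ℝ, 0 ≤ a → a + D n ≤ t →
        h a ≤ Real.exp ((n:ℝ) + 1) → False := by
      intro n hn
      induction n, hn using Nat.le_induction with
      | base =>
        intro a ha haD hha
        have hDK : D K = δ K := by
          simp only [hD, Finset.Icc_self, Finset.sum_singleton]
        have hδK := hδpos K hK1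
        set b := a + δ K with hb
        have hbt : b ≤ t := by rw [hb]; rw [hDK] at haD; linarith
        have hbig : ∀ s ∈ Set.Icc a b, Real.exp (K:ℝ) ≤ h s := by
          intro s hs
          exact le_of_lt (hcon s ⟨le_trans ha hs.1, le_trans hs.2 hbt⟩)
        have hdesc := sl_descent c₁ c₂ γ hc₂ hγ h hcont hone hineq a b (K:ℝ) ha
          (by rw [hb]; linarith) (by positivity) hbig (hc₁k K le_rfl)
        have hdrop : c₂ / 2 * (Real.exp (K:ℝ) * (K:ℝ) ^ (1 + γ)) * (b - a)
            = (E - 1) * Real.exp (K:ℝ) := by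
          rw [hb]
          have := hδcalc K hK1
          simpa using this
        have hEK : Real.exp ((K:ℝ) + 1) = Real.exp (K:ℝ) * E := by
          rw [hE, ← Real.exp_add]
        have hhb : h b ≤ Real.exp (K:ℝ) := by
          rw [hdrop] at hdesc
          rw [hEK] at hha
          have hid : Real.exp (K:ℝ) * E - (E - 1) * Real.exp (K:ℝ) = Real.exp (K:ℝ) := by ring
          linarith
        exact absurd hhb (not_le.2 (hcon b ⟨by rw [hb]; linarith, hbt⟩))
      | succ n hn ih =>
        intro a ha haD hha
        have hDsucc : D (n + 1) = D n + δ (n + 1) := by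
          simp only [hD]
          exact Finset.sum_Icc_succ_top (le_trans hn (Nat.le_succ n)) δ
        have hδn := hδpos (n + 1) (Nat.le_add_left 1 n)
        by_cases hcase : ∃ s ∈ Set.Icc a (a + δ (n + 1)), h s ≤ Real.exp ((n:ℝ) + 1)
        · obtain ⟨s, hs, hhs⟩ := hcase
          exact ih s (le_trans ha hs.1)
            (by rw [hDsucc] at haD; linarith [hs.2]) hhs
        · push_neg at hcase
          set b := a + δ (n + 1) with hb
          have hbig : ∀ s ∈ Set.Icc a b, Real.exp ((n:ℝ) + 1) ≤ h s :=
            fun s hs => le_of_lt (hcase s hs)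
          have hcastn : ((n + 1 : ℕ):ℝ) = (n:ℝ) + 1 := by push_cast; ring
          have hbig' : ∀ s ∈ Set.Icc a b, Real.exp ((n + 1 : ℕ):ℝ) ≤ h s := by
            rw [hcastn]; exact hbig
          have hdesc := sl_descent c₁ c₂ γ hc₂ hγ h hcont hone hineq a b
            ((n + 1 : ℕ):ℝ) ha (by rw [hb]; linarith) (by positivity) hbig'
            (hc₁k (n + 1) (le_trans hn (Nat.le_succ n)))
          have hdrop : c₂ / 2 * (Real.exp ((n + 1 : ℕ):ℝ) * ((n + 1 : ℕ):ℝ) ^ (1 + γ)) * (b - a)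
              = (E - 1) * Real.exp ((n + 1 : ℕ):ℝ) := by
            rw [hb]
            have := hδcalc (n + 1) (Nat.le_add_left 1 n)
            simpa using this
          have hEn : Real.exp (((n + 1 : ℕ):ℝ) + 1) = Real.exp ((n + 1 : ℕ):ℝ) * E := by
            rw [hE, ← Real.exp_add]
          have hha' : h a ≤ Real.exp (((n + 1 : ℕ):ℝ)) * E := by
            rw [← hEn]
            rw [hcastn]
            convert hha using 2
            push_cast; ring
          have hhb : h b ≤ Real.exp ((n:ℝ) + 1) := by
            rw [hdrop] at hdesc
            rw [← hcastn]
            have hid : Real.exp ((n + 1 : ℕ):ℝ) * E - (E - 1) * Real.exp ((n + 1 : ℕ):ℝ)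
                = Real.exp ((n + 1 : ℕ):ℝ) := by ring
            linarith
          exact ih b (by rw [hb]; linarith)
            (by rw [hDsucc] at haD; rw [hb]; linarith) hhb
    -- apply the induction from the initial value
    obtain ⟨N, hN⟩ := exists_nat_gt (max (K:ℝ) (h 0))
    have hKN : K ≤ N := by
      have : (K:ℝ) < (N:ℝ) := lt_of_le_of_lt (le_max_left _ _) hN
      exact_mod_cast le_of_lt this
    have hh0 : h 0 ≤ Real.exp ((N:ℝ) + 1) := by
      have h16 : h 0 < (N:ℝ) := lt_of_le_of_lt (le_max_right _ _) hN
      have h17 := Real.add_one_le_exp ((N:ℝ) + 1)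
      linarith
    exact main N hKN 0 le_rfl (by simpa using hDt N hKN) hh0
  obtain ⟨s, hs, hhs⟩ := key
  -- propagate forward with at most linear growth
  have hst := hineq s t hs.1 hs.2
  have hintnn : 0 ≤ ∫ u in s..t, h u * Real.log (h u) ^ (1 + γ) := by
    apply intervalIntegral.integral_nonneg hs.2
    intro u hu
    have hu0 : (0:ℝ) ≤ u := le_trans hs.1 hu.1
    have h1u : 1 ≤ h u := hone u hu0
    have hlognn : 0 ≤ Real.log (h u) := Real.log_nonneg h1u
    exact mul_nonneg (by linarith) (Real.rpow_nonneg hlognn _)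
  have h19 : c₁ * (t - s) ≤ c₁ * t :=
    mul_le_mul_of_nonneg_left (by linarith [hs.1]) (le_of_lt hc₁)
  have h18 : 0 ≤ c₂ * ∫ u in s..t, h u * Real.log (h u) ^ (1 + γ) :=
    mul_nonneg (le_of_lt hc₂) hintnn
  linarith
end

section
/- Harnack inequality implies irreducibility of a Markov kernel (argument in the proof of Theorem 2.3(2)): Let (E, d) be a metric space with its Borel σ-algebra, let κ be a Markov kernel from E to E, and let μ be a probability measure on E that is invariant for κ, i.e. ∫_E κ(x)(B) dμ(x) = μ(B) for every Borel set B. Suppose there is a constant c > 0 such that the Harnack inequality (∫_E f dκ(η))² ≤ (∫_E f² dκ(ξ)) · e^{c·d(ξ,η)²} holds for all bounded measurable f : E → [0,∞) and all ξ, η ∈ E. Then for every Borel set B with μ(B) > 0 one has κ(ξ)(B) > 0 for every ξ ∈ E; consequently κ is μ-irreducible, i.e. ∫_A κ(ξ)(B) dμ(ξ) > 0 whenever A and B are Borel sets with μ(A) > 0 and μ(B) > 0. -/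
open MeasureTheory ProbabilityTheory
open scoped ENNReal

/-!
Applied to the indicator of `B`, which equals its own square, the Harnack inequality reads
`κ(η)(B)² ≤ κ(ξ)(B) e^{c d(ξ,η)²}`: if some `κ(η)` charges `B`, then every `κ(ξ)` does.
Invariance `μ(B) = ∫ κ(x)(B) dμ(x)` provides such an `η` as soon as `μ(B) > 0`, and a
positive function has positive integral over any set of positive measure.
-/

namespace ProbabilityTheory.Kernel

variable {E : Type*} [MeasurableSpace E]

def HarnackInequality [PseudoMetricSpace E] (κ : Kernel E E) (c : ℝ) : Prop :=
  ∀ f : E → ℝ, Measurable f → (∀ x, 0 ≤ f x) → (∃ M : ℝ, ∀ x, f x ≤ M) →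
    ∀ ξ η : E, (∫ x, f x ∂(κ η)) ^ 2 ≤ (∫ x, f x ^ 2 ∂(κ ξ)) * Real.exp (c * dist ξ η ^ 2)

namespace HarnackInequality

variable [PseudoMetricSpace E] {κ : Kernel E E} {c : ℝ}

theorem measureReal_sq_le (h : HarnackInequality κ c) {B : Set E} (hB : MeasurableSet B)
    (ξ η : E) : (κ η).real B ^ 2 ≤ (κ ξ).real B * Real.exp (c * dist ξ η ^ 2) := by
  have hsq : (fun x ↦ B.indicator (1 : E → ℝ) x ^ 2) = B.indicator 1 := by
    ext x
    by_cases hx : x ∈ B <;> simp [hx]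
  have := h (B.indicator 1) (measurable_const.indicator hB)
    (Set.indicator_nonneg fun _ _ ↦ zero_le_one)
    ⟨1, Set.indicator_le_self' fun _ _ ↦ zero_le_one⟩ ξ η
  rwa [hsq, integral_indicator_one hB, integral_indicator_one hB] at this

theorem apply_pos_of_apply_pos [IsFiniteKernel κ] (h : HarnackInequality κ c) {B : Set E}
    (hB : MeasurableSet B) {η : E} (hη : 0 < κ η B) (ξ : E) : 0 < κ ξ B := by
  have hη_real : 0 < (κ η).real B := ENNReal.toReal_pos hη.ne' (measure_ne_top _ _)
  have hξ_real : 0 < (κ ξ).real B := by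
    by_contra! hξ
    have := h.measureReal_sq_le hB ξ η
    nlinarith [Real.exp_pos (c * dist ξ η ^ 2)]
  exact (ENNReal.toReal_pos_iff.mp hξ_real).1

end HarnackInequality

theorem exists_apply_pos_of_lintegral_eq (κ : Kernel E E) {μ : Measure E} {B : Set E}
    (hinv : ∫⁻ x, κ x B ∂μ = μ B) (hμB : 0 < μ B) : ∃ η, 0 < κ η B := by
  by_contra! h
  have hzero : ∫⁻ x, κ x B ∂μ = 0 := by simp [fun x ↦ nonpos_iff_eq_zero.mp (h x)]
  exact hμB.ne' (hinv ▸ hzero)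

theorem setLIntegral_apply_pos (κ : Kernel E E) {μ : Measure E} {A B : Set E}
    (hB : MeasurableSet B) (hpos : ∀ ξ, 0 < κ ξ B) (hμA : 0 < μ A) :
    0 < ∫⁻ ξ in A, κ ξ B ∂μ := by
  have hsupp : Function.support (fun ξ ↦ κ ξ B) = Set.univ :=
    Function.support_eq_iff.mpr ⟨fun ξ _ ↦ (hpos ξ).ne', fun _ h ↦ absurd trivial h⟩
  rwa [setLIntegral_pos_iff (κ.measurable_coe hB), hsupp, Set.univ_inter]

end ProbabilityTheory.Kernel

theorem harnack_implies_irreducible_general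
    {E : Type*} [MetricSpace E] [MeasurableSpace E]
    (κ : Kernel E E) [IsMarkovKernel κ]
    (μ : Measure E)
    (hinv : ∀ B : Set E, MeasurableSet B → ∫⁻ x, κ x B ∂μ = μ B)
    (c : ℝ)
    (harnack : ∀ f : E → ℝ, Measurable f → (∀ x, 0 ≤ f x) → (∃ M : ℝ, ∀ x, f x ≤ M) →
      ∀ ξ η : E,
        (∫ x, f x ∂(κ η)) ^ 2 ≤
          (∫ x, f x ^ 2 ∂(κ ξ)) * Real.exp (c * dist ξ η ^ 2)) :
    (∀ B : Set E, MeasurableSet B → 0 < μ B → ∀ ξ : E, 0 < κ ξ B) ∧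
    (∀ A B : Set E, MeasurableSet A → MeasurableSet B → 0 < μ A → 0 < μ B →
      0 < ∫⁻ ξ in A, κ ξ B ∂μ) := by
  have charges : ∀ B : Set E, MeasurableSet B → 0 < μ B → ∀ ξ : E, 0 < κ ξ B := by
    intro B hB hμB
    obtain ⟨η, hη⟩ := κ.exists_apply_pos_of_lintegral_eq (hinv B hB) hμB
    exact Kernel.HarnackInequality.apply_pos_of_apply_pos harnack hB hη
  exact ⟨charges, fun A B _ hB hμA hμB ↦ κ.setLIntegral_apply_pos hB (charges B hB hμB) hμA⟩

/-- **Harnack inequality implies irreducibility of a Markov kernel** (argument in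
the proof of Theorem 2.3(2) of the paper). If a Markov kernel `κ` with invariant
probability measure `μ` satisfies the Harnack inequality
`(∫ f dκ(η))² ≤ (∫ f² dκ(ξ)) e^{c d(ξ,η)²}` for all bounded measurable `f ≥ 0`,
then `κ(ξ)(B) > 0` whenever `μ(B) > 0`, and consequently `κ` is `μ`-irreducible. -/
theorem harnack_implies_irreducible
    {E : Type*} [MetricSpace E] [MeasurableSpace E] [BorelSpace E]
    (κ : Kernel E E) [IsMarkovKernel κ]
    (μ : Measure E) [IsProbabilityMeasure μ]
    (hinv : ∀ B : Set E, MeasurableSet B → ∫⁻ x, κ x B ∂μ = μ B)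
    (c : ℝ) (hc : 0 < c)
    (harnack : ∀ f : E → ℝ, Measurable f → (∀ x, 0 ≤ f x) → (∃ M : ℝ, ∀ x, f x ≤ M) →
      ∀ ξ η : E,
        (∫ x, f x ∂(κ η)) ^ 2 ≤
          (∫ x, f x ^ 2 ∂(κ ξ)) * Real.exp (c * dist ξ η ^ 2)) :
    (∀ B : Set E, MeasurableSet B → 0 < μ B → ∀ ξ : E, 0 < κ ξ B) ∧
    (∀ A B : Set E, MeasurableSet A → MeasurableSet B → 0 < μ A → 0 < μ B →
      0 < ∫⁻ ξ in A, κ ξ B ∂μ) :=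
  harnack_implies_irreducible_general κ μ hinv c harnack
end

section
/- A Harnack inequality yields a square-integrable density for a Markov kernel (argument in the proof of Theorem 2.3(2)): Let (E, d) be a metric space with its Borel σ-algebra, let κ be a Markov kernel from E to E, and let μ be a probability measure on E that is invariant for κ, i.e. ∫_E κ(x)(B) dμ(x) = μ(B) for every Borel set B. Suppose there is a constant c > 0 such that the Harnack inequality (∫_E f dκ(η))² ≤ (∫_E f² dκ(ξ)) · e^{c·d(ξ,η)²} holds for all bounded measurable f : E → [0,∞) and all ξ, η ∈ E. Then for every ξ ∈ E the measure κ(ξ) is absolutely continuous with respect to μ, and its Radon–Nikodym density h_ξ := dκ(ξ)/dμ satisfies ∫_E h_ξ² dμ ≤ (∫_E e^{−c·d(ξ,η)²} dμ(η))^{-1}, where the integral ∫_E e^{−c·d(ξ,η)²} dμ(η) is strictly positive. -/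
open MeasureTheory ProbabilityTheory
open scoped ENNReal NNReal

/-! An invariant measure integrates the kernel back to itself, so for a truncation `g` of the
density `h_ξ = dκ(ξ)/dμ`, integrating the Harnack inequality (with `ξ, η` swapped) against `μ`
gives `(∫ g dκ(ξ))² · ∫ e^{-c d(ξ,·)²} dμ ≤ ∫ g² dμ`. Since `g ≤ h_ξ` also gives
`∫ g² dμ ≤ ∫ g dκ(ξ)`, the finite number `A = ∫ g² dμ` satisfies `A² · ∫ e^{-c d(ξ,·)²} dμ ≤ A`,
and monotone convergence in the truncation level finishes. Absolute continuity comes from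
Harnack applied to indicators, which makes all `κ(η)` equivalent: a `μ`-null set is
`κ(η)`-null for `μ`-almost every `η` by invariance, hence `κ(ξ)`-null. -/

namespace ProbabilityTheory.Kernel

variable {α : Type*} [MeasurableSpace α] {κ : Kernel α α} {μ : Measure α}

theorem invariant_of_forall_lintegral_apply_eq
    (h : ∀ B : Set α, MeasurableSet B → ∫⁻ x, κ x B ∂μ = μ B) : κ.Invariant μ := by
  ext B hB
  rw [Measure.bind_apply hB κ.aemeasurable, h B hB]

theorem Invariant.lintegral_lintegral (hκ : κ.Invariant μ) {g : α → ℝ≥0∞} (hg : Measurable g) :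
    ∫⁻ η, ∫⁻ x, g x ∂κ η ∂μ = ∫⁻ x, g x ∂μ := by
  rw [← Measure.lintegral_bind κ.aemeasurable hg.aemeasurable, hκ.def]

theorem Invariant.absolutelyContinuous [NeZero μ] (hκ : κ.Invariant μ) {ξ : α}
    (h : ∀ η, κ ξ ≪ κ η) : κ ξ ≪ μ := by
  refine Measure.AbsolutelyContinuous.mk fun B hB hμB => ?_
  have hint : ∫⁻ η, κ η B ∂μ = 0 := by
    rw [← Measure.bind_apply hB κ.aemeasurable, hκ.def, hμB]
  obtain ⟨η, hη⟩ := ((lintegral_eq_zero_iff (κ.measurable_coe hB)).mp hint).exists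
  exact h η hη

def Harnack (κ : Kernel α α) (C : α → α → ℝ) : Prop :=
  ∀ f : α → ℝ, Measurable f → (∀ x, 0 ≤ f x) → (∃ M : ℝ, ∀ x, f x ≤ M) →
    ∀ ξ η : α, (∫ x, f x ∂(κ η)) ^ 2 ≤ (∫ x, f x ^ 2 ∂(κ ξ)) * C ξ η

end ProbabilityTheory.Kernel

namespace MeasureTheory

variable {α : Type*} [MeasurableSpace α]

theorem sq_lintegral_le_mul_ofReal_of_sq_integral_toReal_le {ν ν' : Measure α}
    [IsFiniteMeasure ν] [IsFiniteMeasure ν'] {g : α → ℝ≥0∞} (hg : Measurable g) {M : ℝ≥0}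
    (hgM : ∀ x, g x ≤ M) {C : ℝ}
    (h : (∫ x, (g x).toReal ∂ν) ^ 2 ≤ (∫ x, (g x).toReal ^ 2 ∂ν') * C) :
    (∫⁻ x, g x ∂ν) ^ 2 ≤ (∫⁻ x, g x ^ 2 ∂ν') * ENNReal.ofReal C := by
  have hg_lt_top : ∀ x, g x < ∞ := fun x => (hgM x).trans_lt ENNReal.coe_lt_top
  have hfin : ∫⁻ x, g x ∂ν ≠ ∞ :=
    (IsFiniteMeasure.lintegral_lt_top_of_bounded_to_ennreal ν ⟨M, hgM⟩).ne
  have hfin_sq : ∫⁻ x, g x ^ 2 ∂ν' ≠ ∞ :=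
    (IsFiniteMeasure.lintegral_lt_top_of_bounded_to_ennreal ν'
      ⟨M ^ 2, fun x => by simpa using pow_le_pow_left' (hgM x) 2⟩).ne
  simp_rw [← ENNReal.toReal_pow] at h
  rw [integral_toReal hg.aemeasurable (ae_of_all _ hg_lt_top),
    integral_toReal (hg.pow_const 2).aemeasurable
      (ae_of_all _ fun x => ENNReal.pow_lt_top (hg_lt_top x))] at h
  calc (∫⁻ x, g x ∂ν) ^ 2 = ENNReal.ofReal ((∫⁻ x, g x ∂ν).toReal ^ 2) := by
        rw [ENNReal.ofReal_pow ENNReal.toReal_nonneg, ENNReal.ofReal_toReal hfin]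
    _ ≤ ENNReal.ofReal ((∫⁻ x, g x ^ 2 ∂ν').toReal * C) := ENNReal.ofReal_le_ofReal h
    _ = (∫⁻ x, g x ^ 2 ∂ν') * ENNReal.ofReal C := by
        rw [ENNReal.ofReal_mul ENNReal.toReal_nonneg, ENNReal.ofReal_toReal hfin_sq]

theorem lintegral_sq_le_lintegral_of_le_rnDeriv {μ ν : Measure α} {g : α → ℝ≥0∞}
    (hg : Measurable g) (hgh : g ≤ ν.rnDeriv μ) : ∫⁻ x, g x ^ 2 ∂μ ≤ ∫⁻ x, g x ∂ν :=
  calc ∫⁻ x, g x ^ 2 ∂μ ≤ ∫⁻ x, ν.rnDeriv μ x * g x ∂μ :=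
        lintegral_mono fun x => by rw [sq]; exact mul_le_mul_left (hgh x) _
    _ = ∫⁻ x, g x ∂μ.withDensity (ν.rnDeriv μ) :=
        (lintegral_withDensity_eq_lintegral_mul _ (Measure.measurable_rnDeriv ν μ) hg).symm
    _ ≤ ∫⁻ x, g x ∂ν := lintegral_mono' (Measure.withDensity_rnDeriv_le ν μ) le_rfl

theorem lintegral_sq_eq_iSup_lintegral_min_natCast_sq {μ : Measure α} {h : α → ℝ≥0∞}
    (hh : Measurable h) : ∫⁻ x, h x ^ 2 ∂μ = ⨆ n : ℕ, ∫⁻ x, min (h x) n ^ 2 ∂μ := by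
  rw [← lintegral_iSup (fun n => (hh.min measurable_const).pow_const 2)
    fun m n hmn x => pow_le_pow_left' (min_le_min_left _ (Nat.cast_le.mpr hmn)) 2]
  congr with x
  rw [← ENNReal.iSup_pow, ← inf_iSup_eq, ENNReal.iSup_natCast, inf_top_eq]

end MeasureTheory

theorem ENNReal.le_inv_of_sq_mul_le {a b : ℝ≥0∞} (ha : a ≠ ∞) (h : a ^ 2 * b ≤ a) : a ≤ b⁻¹ := by
  rcases eq_or_ne a 0 with rfl | ha0
  · exact zero_le
  rw [ENNReal.le_inv_iff_mul_le, ← ENNReal.mul_le_mul_iff_right ha0 ha, mul_one, ← mul_assoc, ← sq]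
  exact h

namespace ProbabilityTheory.Kernel.Harnack

variable {α : Type*} [MeasurableSpace α] {κ : Kernel α α} [IsFiniteKernel κ] {C : α → α → ℝ}
  {g : α → ℝ≥0∞} {M : ℝ≥0}

theorem sq_lintegral_le (hC : κ.Harnack C) (hg : Measurable g) (hgM : ∀ x, g x ≤ M) (ξ η : α) :
    (∫⁻ x, g x ∂κ η) ^ 2 ≤ (∫⁻ x, g x ^ 2 ∂κ ξ) * ENNReal.ofReal (C ξ η) :=
  sq_lintegral_le_mul_ofReal_of_sq_integral_toReal_le hg hgM <|
    hC _ hg.ennreal_toReal (fun _ => ENNReal.toReal_nonneg)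
      ⟨M, fun x => ENNReal.toReal_le_coe_of_le_coe (hgM x)⟩ ξ η

theorem absolutelyContinuous (hC : κ.Harnack C) (ξ η : α) : κ η ≪ κ ξ := by
  refine Measure.AbsolutelyContinuous.mk fun B hB hξB => ?_
  have hsq : (fun x => B.indicator (1 : α → ℝ≥0∞) x ^ 2) = B.indicator 1 := by
    ext x; by_cases hx : x ∈ B <;> simp [hx]
  have h := hC.sq_lintegral_le (measurable_one.indicator hB) (M := 1)
    (fun x => by by_cases hx : x ∈ B <;> simp [hx]) ξ η
  rw [hsq, lintegral_indicator_one hB, lintegral_indicator_one hB, hξB, zero_mul] at h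
  exact pow_eq_zero_iff two_ne_zero |>.mp (nonpos_iff_eq_zero.mp h)

theorem sq_lintegral_mul_ofReal_inv_le (hC : κ.Harnack C) (hg : Measurable g)
    (hgM : ∀ x, g x ≤ M) (ξ η : α) :
    (∫⁻ x, g x ∂κ ξ) ^ 2 * ENNReal.ofReal (C η ξ)⁻¹ ≤ ∫⁻ x, g x ^ 2 ∂κ η := by
  rcases le_or_gt (C η ξ) 0 with hC0 | hC0
  · simp [ENNReal.ofReal_of_nonpos (inv_nonpos.mpr hC0)]
  calc (∫⁻ x, g x ∂κ ξ) ^ 2 * ENNReal.ofReal (C η ξ)⁻¹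
      ≤ (∫⁻ x, g x ^ 2 ∂κ η) * ENNReal.ofReal (C η ξ) * ENNReal.ofReal (C η ξ)⁻¹ := by
        gcongr; exact hC.sq_lintegral_le hg hgM η ξ
    _ = ∫⁻ x, g x ^ 2 ∂κ η := by
        rw [mul_assoc, ← ENNReal.ofReal_mul hC0.le, mul_inv_cancel₀ hC0.ne', ENNReal.ofReal_one,
          mul_one]

variable {μ : Measure α} [IsFiniteMeasure μ]

theorem lintegral_sq_le_of_le_rnDeriv (hC : κ.Harnack C) (hκ : κ.Invariant μ) (hg : Measurable g)
    (hgM : ∀ x, g x ≤ M) {ξ : α} (hgh : g ≤ (κ ξ).rnDeriv μ) :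
    ∫⁻ x, g x ^ 2 ∂μ ≤ (∫⁻ η, ENNReal.ofReal (C η ξ)⁻¹ ∂μ)⁻¹ := by
  have hfin : ∫⁻ x, g x ∂κ ξ ≠ ∞ :=
    (IsFiniteMeasure.lintegral_lt_top_of_bounded_to_ennreal _ ⟨M, hgM⟩).ne
  refine ENNReal.le_inv_of_sq_mul_le
    (IsFiniteMeasure.lintegral_lt_top_of_bounded_to_ennreal μ
      ⟨M ^ 2, fun x => by simpa using pow_le_pow_left' (hgM x) 2⟩).ne ?_
  calc (∫⁻ x, g x ^ 2 ∂μ) ^ 2 * ∫⁻ η, ENNReal.ofReal (C η ξ)⁻¹ ∂μ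
      ≤ (∫⁻ x, g x ∂κ ξ) ^ 2 * ∫⁻ η, ENNReal.ofReal (C η ξ)⁻¹ ∂μ := by
        gcongr ?_ ^ 2 * _
        exact lintegral_sq_le_lintegral_of_le_rnDeriv hg hgh
    _ = ∫⁻ η, (∫⁻ x, g x ∂κ ξ) ^ 2 * ENNReal.ofReal (C η ξ)⁻¹ ∂μ :=
        (lintegral_const_mul' _ _ (ENNReal.pow_ne_top hfin)).symm
    _ ≤ ∫⁻ η, ∫⁻ x, g x ^ 2 ∂κ η ∂μ :=
        lintegral_mono fun η => hC.sq_lintegral_mul_ofReal_inv_le hg hgM ξ η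
    _ = ∫⁻ x, g x ^ 2 ∂μ := hκ.lintegral_lintegral (hg.pow_const 2)

theorem lintegral_rnDeriv_sq_le (hC : κ.Harnack C) (hκ : κ.Invariant μ) (ξ : α) :
    ∫⁻ x, (κ ξ).rnDeriv μ x ^ 2 ∂μ ≤ (∫⁻ η, ENNReal.ofReal (C η ξ)⁻¹ ∂μ)⁻¹ := by
  rw [lintegral_sq_eq_iSup_lintegral_min_natCast_sq (Measure.measurable_rnDeriv _ _)]
  exact iSup_le fun n => hC.lintegral_sq_le_of_le_rnDeriv hκ
    ((Measure.measurable_rnDeriv _ _).min measurable_const) (M := n)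
    (fun x => by simp) fun x => min_le_left _ _

end ProbabilityTheory.Kernel.Harnack

theorem harnack_implies_square_integrable_density_general
    {E : Type*} [MetricSpace E] [MeasurableSpace E] [BorelSpace E]
    (κ : Kernel E E) [IsMarkovKernel κ]
    (μ : Measure E) [IsProbabilityMeasure μ]
    (hinv : ∀ B : Set E, MeasurableSet B → ∫⁻ x, κ x B ∂μ = μ B)
    (c : ℝ)
    (harnack : ∀ f : E → ℝ, Measurable f → (∀ x, 0 ≤ f x) → (∃ M : ℝ, ∀ x, f x ≤ M) →
      ∀ ξ η : E,
        (∫ x, f x ∂(κ η)) ^ 2 ≤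
          (∫ x, f x ^ 2 ∂(κ ξ)) * Real.exp (c * dist ξ η ^ 2)) :
    ∀ ξ : E,
      κ ξ ≪ μ ∧
      0 < ∫⁻ η, ENNReal.ofReal (Real.exp (-(c * dist ξ η ^ 2))) ∂μ ∧
      ∫⁻ η, ((κ ξ).rnDeriv μ η) ^ 2 ∂μ ≤
        (∫⁻ η, ENNReal.ofReal (Real.exp (-(c * dist ξ η ^ 2))) ∂μ)⁻¹ := by
  intro ξ
  have hκ : κ.Invariant μ := Kernel.invariant_of_forall_lintegral_apply_eq hinv
  have hC : κ.Harnack fun ξ η => Real.exp (c * dist ξ η ^ 2) := harnack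
  have hweight : (fun η => ENNReal.ofReal (Real.exp (-(c * dist ξ η ^ 2))))
      = fun η => ENNReal.ofReal (Real.exp (c * dist η ξ ^ 2))⁻¹ := by
    simp only [dist_comm ξ, Real.exp_neg]
  refine ⟨hκ.absolutelyContinuous fun η => hC.absolutelyContinuous η ξ, ?_, ?_⟩
  · rw [lintegral_pos_iff_support (by fun_prop)]
    simp [Function.support, Real.exp_pos]
  · rw [hweight]
    exact hC.lintegral_rnDeriv_sq_le hκ ξ

/-- **A Harnack inequality yields a square-integrable density for a Markov kernel**
(argument in the proof of Theorem 2.3(2) of the paper). If a Markov kernel `κ` with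
invariant probability measure `μ` satisfies the Harnack inequality
`(∫ f dκ(η))² ≤ (∫ f² dκ(ξ)) e^{c d(ξ,η)²}`, then each `κ(ξ)` is absolutely
continuous with respect to `μ` with density `h_ξ` satisfying
`∫ h_ξ² dμ ≤ (∫ e^{-c d(ξ,·)²} dμ)⁻¹`, the latter integral being positive. -/
theorem harnack_implies_square_integrable_density
    {E : Type*} [MetricSpace E] [MeasurableSpace E] [BorelSpace E]
    (κ : Kernel E E) [IsMarkovKernel κ]
    (μ : Measure E) [IsProbabilityMeasure μ]
    (hinv : ∀ B : Set E, MeasurableSet B → ∫⁻ x, κ x B ∂μ = μ B)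
    (c : ℝ) (hc : 0 < c)
    (harnack : ∀ f : E → ℝ, Measurable f → (∀ x, 0 ≤ f x) → (∃ M : ℝ, ∀ x, f x ≤ M) →
      ∀ ξ η : E,
        (∫ x, f x ∂(κ η)) ^ 2 ≤
          (∫ x, f x ^ 2 ∂(κ ξ)) * Real.exp (c * dist ξ η ^ 2)) :
    ∀ ξ : E,
      κ ξ ≪ μ ∧
      0 < ∫⁻ η, ENNReal.ofReal (Real.exp (-(c * dist ξ η ^ 2))) ∂μ ∧
      ∫⁻ η, ((κ ξ).rnDeriv μ η) ^ 2 ∂μ ≤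
        (∫⁻ η, ENNReal.ofReal (Real.exp (-(c * dist ξ η ^ 2))) ∂μ)⁻¹ :=
  harnack_implies_square_integrable_density_general κ μ hinv c harnack
end

section
/- Pointwise operator bound from a Harnack inequality (displayed estimate in the proof of Theorem 2.3(2)): Let (E, d) be a metric space with its Borel σ-algebra, let κ be a Markov kernel from E to E, and let μ be a probability measure on E that is invariant for κ, i.e. ∫_E κ(x)(B) dμ(x) = μ(B) for every Borel set B. Suppose there is a constant c > 0 such that the Harnack inequality (∫_E f dκ(η))² ≤ (∫_E f² dκ(ξ)) · e^{c·d(ξ,η)²} holds for all bounded measurable f : E → [0,∞) and all ξ, η ∈ E. Then for every ξ ∈ E and every bounded measurable f : E → [0,∞) with ∫_E f² dμ ≤ 1, one has (∫_E f dκ(ξ))² ≤ (∫_E e^{−c·d(ξ,η)²} dμ(η))^{-1}, where the integral on the right-hand side is strictly positive. -/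
/-!
Applying the Harnack inequality with `ξ` and `η` swapped gives
`(∫ f dκ(ξ))² e^{-c d(ξ,η)²} ≤ ∫ f² dκ(η)` for every `η`. Integrating in `η` against `μ`,
invariance turns the right-hand side into `∫ f² dμ ≤ 1`.
-/

open MeasureTheory ProbabilityTheory
open scoped ENNReal

lemma ofReal_integral_le_lintegral_ofReal {α : Type*} [MeasurableSpace α] {μ : Measure α}
    {f : α → ℝ} (hf : 0 ≤ f) :
    ENNReal.ofReal (∫ x, f x ∂μ) ≤ ∫⁻ x, ENNReal.ofReal (f x) ∂μ := by
  simpa only [Real.enorm_of_nonneg (integral_nonneg hf), Real.enorm_of_nonneg (hf _)]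
    using enorm_integral_le_lintegral_enorm f

namespace ProbabilityTheory.Kernel

variable {α : Type*} [MeasurableSpace α] {κ : Kernel α α} {μ : Measure α}

theorem invariant_iff_lintegral_apply :
    κ.Invariant μ ↔ ∀ B : Set α, MeasurableSet B → ∫⁻ x, κ x B ∂μ = μ B := by
  simp only [Invariant, Measure.ext_iff]
  refine forall₂_congr fun B hB => ?_
  rw [Measure.bind_apply hB κ.aemeasurable]

theorem Invariant.integral_le_of_le_integral (hκ : κ.Invariant μ) {g h : α → ℝ}
    (hg : Integrable g μ) (hg₀ : 0 ≤ g) (hh₀ : 0 ≤ h) (hle : ∀ x, h x ≤ ∫ y, g y ∂κ x) :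
    ∫ x, h x ∂μ ≤ ∫ x, g x ∂μ := by
  have hg_meas : AEMeasurable (fun y => ENNReal.ofReal (g y)) (μ.bind κ) :=
    by rw [hκ.def]; exact hg.aemeasurable.ennreal_ofReal
  rw [← ENNReal.ofReal_le_ofReal_iff (integral_nonneg hg₀),
    ofReal_integral_eq_lintegral_ofReal hg (ae_of_all _ hg₀)]
  calc ENNReal.ofReal (∫ x, h x ∂μ)
      ≤ ∫⁻ x, ENNReal.ofReal (h x) ∂μ := ofReal_integral_le_lintegral_ofReal hh₀
    _ ≤ ∫⁻ x, ∫⁻ y, ENNReal.ofReal (g y) ∂κ x ∂μ := lintegral_mono fun x =>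
        (ENNReal.ofReal_le_ofReal (hle x)).trans (ofReal_integral_le_lintegral_ofReal hg₀)
    _ = ∫⁻ y, ENNReal.ofReal (g y) ∂μ := by
        rw [← Measure.lintegral_bind κ.aemeasurable hg_meas, hκ.def]

end ProbabilityTheory.Kernel

lemma integral_exp_neg_mul_dist_sq_pos {E : Type*} [PseudoMetricSpace E] [MeasurableSpace E]
    [OpensMeasurableSpace E] (μ : Measure E) [IsFiniteMeasure μ] [NeZero μ] {c : ℝ} (hc : 0 ≤ c)
    (ξ : E) : 0 < ∫ η, Real.exp (-(c * dist ξ η ^ 2)) ∂μ := by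
  refine integral_exp_pos (Integrable.of_bound (by fun_prop) 1 (ae_of_all _ fun η => ?_))
  rw [Real.norm_of_nonneg (Real.exp_pos _).le, Real.exp_le_one_iff, neg_nonpos]
  positivity

theorem harnack_pointwise_operator_bound_general
    {E : Type*} [MetricSpace E] [MeasurableSpace E] [BorelSpace E]
    (κ : Kernel E E)
    (μ : Measure E) [IsProbabilityMeasure μ]
    (hinv : ∀ B : Set E, MeasurableSet B → ∫⁻ x, κ x B ∂μ = μ B)
    (c : ℝ) (hc : 0 < c)
    (harnack : ∀ f : E → ℝ, Measurable f → (∀ x, 0 ≤ f x) → (∃ M : ℝ, ∀ x, f x ≤ M) →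
      ∀ ξ η : E,
        (∫ x, f x ∂(κ η)) ^ 2 ≤
          (∫ x, f x ^ 2 ∂(κ ξ)) * Real.exp (c * dist ξ η ^ 2)) :
    ∀ ξ : E,
      0 < ∫ η, Real.exp (-(c * dist ξ η ^ 2)) ∂μ ∧
      ∀ f : E → ℝ, Measurable f → (∀ x, 0 ≤ f x) → (∃ M : ℝ, ∀ x, f x ≤ M) →
        (∫ x, f x ^ 2 ∂μ) ≤ 1 →
        (∫ x, f x ∂(κ ξ)) ^ 2 ≤ (∫ η, Real.exp (-(c * dist ξ η ^ 2)) ∂μ)⁻¹ := by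
  intro ξ
  have hw := integral_exp_neg_mul_dist_sq_pos μ hc.le ξ
  refine ⟨hw, fun f hf hf₀ hbdd hL2 => ?_⟩
  obtain ⟨M, hM⟩ := hbdd
  have hf2 : Integrable (fun x => f x ^ 2) μ :=
    .of_bound (hf.pow_const 2).aestronglyMeasurable (M ^ 2) (ae_of_all _ fun x => by
      rw [Real.norm_of_nonneg (sq_nonneg _)]
      exact pow_le_pow_left₀ (hf₀ x) (hM x) 2)
  have hpointwise : ∀ η, (∫ x, f x ∂(κ ξ)) ^ 2 * Real.exp (-(c * dist ξ η ^ 2)) ≤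
      ∫ x, f x ^ 2 ∂(κ η) := fun η => by
    have h := harnack f hf hf₀ ⟨M, hM⟩ η ξ
    rw [dist_comm] at h
    refine (mul_le_mul_of_nonneg_right h (Real.exp_pos _).le).trans_eq ?_
    rw [mul_assoc, ← Real.exp_add, add_neg_cancel, Real.exp_zero, mul_one]
  rw [← one_div, le_div_iff₀ hw]
  calc (∫ x, f x ∂(κ ξ)) ^ 2 * ∫ η, Real.exp (-(c * dist ξ η ^ 2)) ∂μ
      = ∫ η, (∫ x, f x ∂(κ ξ)) ^ 2 * Real.exp (-(c * dist ξ η ^ 2)) ∂μ :=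
        (integral_const_mul _ _).symm
    _ ≤ ∫ x, f x ^ 2 ∂μ :=
        (Kernel.invariant_iff_lintegral_apply.2 hinv).integral_le_of_le_integral hf2
          (fun _ => sq_nonneg _) (fun _ => by positivity) hpointwise
    _ ≤ 1 := hL2

/-- **Pointwise operator bound from a Harnack inequality** (displayed estimate in
the proof of Theorem 2.3(2) of the paper). If a Markov kernel `κ` with invariant
probability measure `μ` satisfies the Harnack inequality, then for every `ξ` the
integral `∫ e^{-c d(ξ,·)²} dμ` is positive and, for every bounded measurable
`f ≥ 0` with `∫ f² dμ ≤ 1`, `(∫ f dκ(ξ))² ≤ (∫ e^{-c d(ξ,·)²} dμ)⁻¹`. -/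
theorem harnack_pointwise_operator_bound
    {E : Type*} [MetricSpace E] [MeasurableSpace E] [BorelSpace E]
    (κ : Kernel E E) [IsMarkovKernel κ]
    (μ : Measure E) [IsProbabilityMeasure μ]
    (hinv : ∀ B : Set E, MeasurableSet B → ∫⁻ x, κ x B ∂μ = μ B)
    (c : ℝ) (hc : 0 < c)
    (harnack : ∀ f : E → ℝ, Measurable f → (∀ x, 0 ≤ f x) → (∃ M : ℝ, ∀ x, f x ≤ M) →
      ∀ ξ η : E,
        (∫ x, f x ∂(κ η)) ^ 2 ≤
          (∫ x, f x ^ 2 ∂(κ ξ)) * Real.exp (c * dist ξ η ^ 2)) :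
    ∀ ξ : E,
      0 < ∫ η, Real.exp (-(c * dist ξ η ^ 2)) ∂μ ∧
      ∀ f : E → ℝ, Measurable f → (∀ x, 0 ≤ f x) → (∃ M : ℝ, ∀ x, f x ≤ M) →
        (∫ x, f x ^ 2 ∂μ) ≤ 1 →
        (∫ x, f x ∂(κ ξ)) ^ 2 ≤ (∫ η, Real.exp (-(c * dist ξ η ^ 2)) ∂μ)⁻¹ :=
  harnack_pointwise_operator_bound_general κ μ hinv c hc harnack
end
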